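/- arXiv:2010.05722 — 6 statements merged into one kernel-verified Lean document; each statement's English description precedes it below -/
import Mathlib

section
/- Let g and h be commuting orientation-preserving homeomorphisms of the real line. Then no component J₁ of the support of g and component J₂ of the support of h form a 2-chain; i.e., it cannot happen that J₁ ∩ J₂ is a nonempty proper subinterval of both J₁ and J₂. -/
/-- The (open) support of a map of `ℝ`. -/
def suppOf (g : ℝ → ℝ) : Set ℝ := {x | g x ≠ x}

/-- A pair of sets forms a 2-chain if their intersection is a nonempty proper
subset of both. -/
def TwoChain (J₁ J₂ : Set ℝ) : Prop :=
  (J₁ ∩ J₂).Nonempty ∧ J₁ ∩ J₂ ⊂ J₁ ∧ J₁ ∩ J₂ ⊂ J₂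

lemma suppOf_isOpen (f : Equiv.Perm ℝ) (hf : StrictMono (f : ℝ → ℝ)) :
    IsOpen (suppOf f) := by
  have hc : Continuous (f : ℝ → ℝ) := hf.monotone.continuous_of_surjective f.surjective
  exact isOpen_ne_fun hc continuous_id

lemma strictMono_symm (f : Equiv.Perm ℝ) (hf : StrictMono (f : ℝ → ℝ)) :
    StrictMono (f⁻¹ : Equiv.Perm ℝ) := by
  intro x y hxy
  rcases lt_trichotomy ((f⁻¹ : Equiv.Perm ℝ) x) ((f⁻¹ : Equiv.Perm ℝ) y) with hlt | heq | hgt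
  · exact hlt
  · exfalso
    have := congrArg (f : ℝ → ℝ) heq
    simp at this
    exact absurd (this ▸ hxy) (lt_irrefl _)
  · exfalso
    have := hf hgt
    simp at this
    exact absurd (hxy.trans this) (lt_irrefl _)

lemma suppOf_symm (f : Equiv.Perm ℝ) : suppOf (f⁻¹ : Equiv.Perm ℝ) = suppOf f := by
  ext x
  simp only [suppOf, Set.mem_setOf_eq]
  constructor
  · intro hx hfx
    apply hx
    conv_lhs => rw [← hfx]
    simp
  · intro hx hfx
    apply hx
    conv_lhs => rw [← hfx]
    simp

/-- If `f` moves `x`, then `f x` lies in the same component of the support of `f`. -/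
lemma apply_mem_component (f : Equiv.Perm ℝ) (hf : StrictMono (f : ℝ → ℝ)) {x : ℝ}
    (hx : f x ≠ x) : (f : ℝ → ℝ) x ∈ connectedComponentIn (suppOf f) x := by
  rcases hx.lt_or_gt with hlt | hgt
  · -- f x < x : the interval [f x, x] is in the support
    have hsub : Set.Icc ((f : ℝ → ℝ) x) x ⊆ suppOf f := by
      intro t ⟨h1, h2⟩
      intro ht
      have h3 : (f : ℝ → ℝ) t ≤ (f : ℝ → ℝ) x := hf.monotone h2
      rw [ht] at h3
      have : t = (f : ℝ → ℝ) x := le_antisymm h3 h1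
      rw [this] at ht
      have : (f : ℝ → ℝ) ((f : ℝ → ℝ) x) < (f : ℝ → ℝ) x := hf hlt
      rw [ht] at this
      exact lt_irrefl _ this
    have := isPreconnected_Icc.subset_connectedComponentIn
      (x := x) (Set.mem_Icc.mpr ⟨le_of_lt hlt, le_refl x⟩) hsub
    exact this (Set.mem_Icc.mpr ⟨le_refl _, le_of_lt hlt⟩)
  · have hsub : Set.Icc x ((f : ℝ → ℝ) x) ⊆ suppOf f := by
      intro t ⟨h1, h2⟩
      intro ht
      have h3 : (f : ℝ → ℝ) x ≤ (f : ℝ → ℝ) t := hf.monotone h1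
      rw [ht] at h3
      have : t = (f : ℝ → ℝ) x := le_antisymm h2 h3
      rw [this] at ht
      have : (f : ℝ → ℝ) x < (f : ℝ → ℝ) ((f : ℝ → ℝ) x) := hf hgt
      rw [ht] at this
      exact lt_irrefl _ this
    have := isPreconnected_Icc.subset_connectedComponentIn
      (x := x) (Set.mem_Icc.mpr ⟨le_refl x, le_of_lt hgt⟩) hsub
    exact this (Set.mem_Icc.mpr ⟨le_of_lt hgt, le_refl _⟩)

/-- The core asymmetric case: `z` lies in both components, `u` is in the `g`-component
to the right but not in the `h`-component, and `v` is in the `h`-component to the left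
but not in the `g`-component. -/
lemma core (g h : Equiv.Perm ℝ)
    (hg : StrictMono (g : ℝ → ℝ)) (hh : StrictMono (h : ℝ → ℝ))
    (hcomm : ∀ x, (g : ℝ → ℝ) (h x) = (h : ℝ → ℝ) (g x))
    (z u v : ℝ) (hzg : z ∈ suppOf g) (hzh : z ∈ suppOf h)
    (hu1 : u ∈ connectedComponentIn (suppOf g) z)
    (hu2 : u ∉ connectedComponentIn (suppOf h) z)
    (hv1 : v ∈ connectedComponentIn (suppOf h) z)
    (hv2 : v ∉ connectedComponentIn (suppOf g) z)
    (hzu : z < u) (hvz : v < z) : False := by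
  set S₁ := suppOf g with hS₁
  set S₂ := suppOf h with hS₂
  set J₁ := connectedComponentIn S₁ z with hJ₁
  set J₂ := connectedComponentIn S₂ z with hJ₂
  have hzJ₁ : z ∈ J₁ := mem_connectedComponentIn hzg
  have hzJ₂ : z ∈ J₂ := mem_connectedComponentIn hzh
  have hJ₁S : J₁ ⊆ S₁ := connectedComponentIn_subset _ _
  have hJ₂S : J₂ ⊆ S₂ := connectedComponentIn_subset _ _
  have hoJ₁ : J₁.OrdConnected := isPreconnected_connectedComponentIn.ordConnected
  have hoJ₂ : J₂.OrdConnected := isPreconnected_connectedComponentIn.ordConnected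
  have hS₂open : IsOpen S₂ := suppOf_isOpen h hh
  have hJ₂open : IsOpen J₂ := hS₂open.connectedComponentIn
  -- right crossing point b
  set T := J₂ ∩ Set.Icc z u with hT
  have hTne : T.Nonempty := ⟨z, hzJ₂, le_refl z, le_of_lt hzu⟩
  have hTbdd : BddAbove T := ⟨u, fun t ht => ht.2.2⟩
  set b := sSup T with hb
  have hzb : z ≤ b := le_csSup hTbdd ⟨hzJ₂, le_refl z, le_of_lt hzu⟩
  have hbu : b ≤ u := csSup_le hTne fun t ht => ht.2.2
  have hbJ₁ : b ∈ J₁ := hoJ₁.out hzJ₁ hu1 ⟨hzb, hbu⟩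
  have hbJ₂ : b ∉ J₂ := by
    intro hbm
    have hblt : b < u := lt_of_le_of_ne hbu (fun e => hu2 (e ▸ hbm))
    rcases Metric.isOpen_iff.mp hJ₂open b hbm with ⟨ε, hε, hball⟩
    set c := min (b + ε / 2) u with hc
    have hcb : b < c := lt_min (by linarith) hblt
    have hcmem : c ∈ J₂ := by
      apply hball
      rw [Metric.mem_ball, Real.dist_eq, abs_lt]
      constructor
      · linarith [min_le_left (b + ε / 2) u]
      · have : c ≤ b + ε / 2 := min_le_left _ _
        linarith
    have : c ≤ b := le_csSup hTbdd ⟨hcmem, le_trans hzb (le_of_lt hcb), min_le_right _ _⟩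
    linarith
  have hbfix : (h : ℝ → ℝ) b = b := by
    by_contra hbs
    have hbS₂ : b ∈ S₂ := hbs
    set C := connectedComponentIn S₂ b with hC
    have hbC : b ∈ C := mem_connectedComponentIn hbS₂
    have hCopen : IsOpen C := hS₂open.connectedComponentIn
    rcases Metric.isOpen_iff.mp hCopen b hbC with ⟨ε, hε, hball⟩
    obtain ⟨t, htT, htl⟩ := exists_lt_of_lt_csSup hTne (by linarith : b - ε < b)
    have htle : t ≤ b := le_csSup hTbdd htT
    have htC : t ∈ C := by
      apply hball
      rw [Metric.mem_ball, Real.dist_eq, abs_lt]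
      constructor <;> linarith
    have h1 : J₂ = connectedComponentIn S₂ t := connectedComponentIn_eq htT.1
    have h2 : C = connectedComponentIn S₂ t := connectedComponentIn_eq htC
    exact hbJ₂ (h1 ▸ h2 ▸ hbC)
  -- left crossing point a
  set U := J₁ ∩ Set.Icc v z with hU
  have hUne : U.Nonempty := ⟨z, hzJ₁, le_of_lt hvz, le_refl z⟩
  have hUbdd : BddBelow U := ⟨v, fun t ht => ht.2.1⟩
  set a := sInf U with ha
  have haz : a ≤ z := csInf_le hUbdd ⟨hzJ₁, le_of_lt hvz, le_refl z⟩
  have hva : v ≤ a := le_csInf hUne fun t ht => ht.2.1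
  have haJ₂ : a ∈ J₂ := hoJ₂.out hv1 hzJ₂ ⟨hva, haz⟩
  have hS₁open : IsOpen S₁ := suppOf_isOpen g hg
  have hJ₁open : IsOpen J₁ := hS₁open.connectedComponentIn
  have haJ₁ : a ∉ J₁ := by
    intro ham
    have halt : v < a := lt_of_le_of_ne hva (fun e => hv2 (e ▸ ham))
    rcases Metric.isOpen_iff.mp hJ₁open a ham with ⟨ε, hε, hball⟩
    set c := max (a - ε / 2) v with hc
    have hca : c < a := max_lt (by linarith) halt
    have hcmem : c ∈ J₁ := by
      apply hball
      rw [Metric.mem_ball, Real.dist_eq, abs_lt]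
      constructor
      · have : a - ε / 2 ≤ c := le_max_left _ _
        linarith
      · linarith [le_max_left (a - ε / 2) v]
    have : a ≤ c := csInf_le hUbdd ⟨hcmem, le_max_right _ _, le_trans (le_of_lt hca) haz⟩
    linarith
  have hafix : (g : ℝ → ℝ) a = a := by
    by_contra has
    have haS₁ : a ∈ S₁ := has
    set C := connectedComponentIn S₁ a with hC
    have haC : a ∈ C := mem_connectedComponentIn haS₁
    have hCopen : IsOpen C := hS₁open.connectedComponentIn
    rcases Metric.isOpen_iff.mp hCopen a haC with ⟨ε, hε, hball⟩
    obtain ⟨t, htU, htl⟩ := exists_lt_of_csInf_lt hUne (by linarith : a < a + ε)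
    have htle : a ≤ t := csInf_le hUbdd htU
    have htC : t ∈ C := by
      apply hball
      rw [Metric.mem_ball, Real.dist_eq, abs_lt]
      constructor <;> linarith
    have h1 : J₁ = connectedComponentIn S₁ t := connectedComponentIn_eq htU.1
    have h2 : C = connectedComponentIn S₁ t := connectedComponentIn_eq htC
    exact haJ₁ (h1 ▸ h2 ▸ haC)
  -- a is moved by h
  have haS₂ : a ∈ S₂ := hJ₂S haJ₂
  have hha : (h : ℝ → ℝ) a ≠ a := haS₂
  have hJ₂a : J₂ = connectedComponentIn S₂ a := connectedComponentIn_eq haJ₂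
  -- produce w > a with w ∈ J₂ and g w = w
  obtain ⟨w, hwa, hwJ₂, hgw⟩ :
      ∃ w : ℝ, a < w ∧ w ∈ J₂ ∧ (g : ℝ → ℝ) w = w := by
    rcases hha.lt_or_gt with hlt | hgtw
    · -- h a < a : use h⁻¹ a
      have hhinv : StrictMono ((h⁻¹ : Equiv.Perm ℝ) : ℝ → ℝ) := strictMono_symm h hh
      have hwa : a < (h⁻¹ : Equiv.Perm ℝ) a := by
        have := hhinv hlt
        simpa using this
      have hne : ((h⁻¹ : Equiv.Perm ℝ) : ℝ → ℝ) a ≠ a := ne_of_gt hwa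
      have hmem := apply_mem_component (h⁻¹ : Equiv.Perm ℝ) hhinv hne
      rw [suppOf_symm h] at hmem
      refine ⟨(h⁻¹ : Equiv.Perm ℝ) a, hwa, ?_, ?_⟩
      · rw [hJ₂a]; exact hmem
      · -- g (h⁻¹ a) = h⁻¹ (g a) = h⁻¹ a
        have key : (g : ℝ → ℝ) ((h⁻¹ : Equiv.Perm ℝ) a) = (h⁻¹ : Equiv.Perm ℝ) ((g : ℝ → ℝ) a) := by
          have := hcomm ((h⁻¹ : Equiv.Perm ℝ) a)
          have h2 : (h : ℝ → ℝ) ((h⁻¹ : Equiv.Perm ℝ) a) = a := by simp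
          rw [h2] at this
          have := congrArg ((h⁻¹ : Equiv.Perm ℝ) : ℝ → ℝ) this
          simpa using this.symm
        rw [key, hafix]
    · -- a < h a : use h a
      have hmem := apply_mem_component h hh hha
      refine ⟨(h : ℝ → ℝ) a, hgtw, ?_, ?_⟩
      · rw [hJ₂a]; exact hmem
      · rw [hcomm a, hafix]
  -- w < b
  have hwb : w < b := by
    rcases lt_trichotomy w b with hlt | heq | hgt
    · exact hlt
    · exact absurd (heq ▸ hwJ₂) hbJ₂
    · exact absurd (hoJ₂.out haJ₂ hwJ₂ ⟨le_of_lt (lt_of_le_of_lt haz (lt_of_le_of_ne hzb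
        (fun e => hbJ₂ (e ▸ hzJ₂)))), le_of_lt hgt⟩) hbJ₂
  -- w ∈ J₁
  obtain ⟨t, htU, htw⟩ := exists_lt_of_csInf_lt hUne (show sInf U < w from hwa)
  have hwJ₁ : w ∈ J₁ := hoJ₁.out htU.1 hbJ₁ ⟨le_of_lt htw, le_of_lt hwb⟩
  exact (hJ₁S hwJ₁) hgw

/-- commuting orientation-preserving homeomorphisms of `ℝ` have no
2-chain among the components of their supports. -/
theorem stmt1 (g h : Equiv.Perm ℝ)
    (hg : StrictMono (g : ℝ → ℝ)) (hh : StrictMono (h : ℝ → ℝ))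
    (hcomm : g * h = h * g)
    (x₁ x₂ : ℝ) (hx₁ : g x₁ ≠ x₁) (hx₂ : h x₂ ≠ x₂) :
    ¬ TwoChain (connectedComponentIn (suppOf g) x₁)
        (connectedComponentIn (suppOf h) x₂) := by
  rintro ⟨⟨z, hz₁, hz₂⟩, hss₁, hss₂⟩
  have hcomm' : ∀ x, (g : ℝ → ℝ) (h x) = (h : ℝ → ℝ) (g x) := fun x => by
    have := congrArg (fun f : Equiv.Perm ℝ => (f : ℝ → ℝ) x) hcomm
    simpa using this
  have hcomm'' : ∀ x, (h : ℝ → ℝ) (g x) = (g : ℝ → ℝ) (h x) := fun x => (hcomm' x).symm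
  set J₁ := connectedComponentIn (suppOf g) x₁ with hJ₁
  set J₂ := connectedComponentIn (suppOf h) x₂ with hJ₂
  have hzg : z ∈ suppOf g := connectedComponentIn_subset _ _ hz₁
  have hzh : z ∈ suppOf h := connectedComponentIn_subset _ _ hz₂
  have hJ₁z : J₁ = connectedComponentIn (suppOf g) z := connectedComponentIn_eq hz₁
  have hJ₂z : J₂ = connectedComponentIn (suppOf h) z := connectedComponentIn_eq hz₂
  -- get u ∈ J₁ \ J₂ and v ∈ J₂ \ J₁
  obtain ⟨u, hu₁, hu₂⟩ : ∃ u, u ∈ J₁ ∧ u ∉ J₂ := by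
    obtain ⟨u, huJ, huI⟩ := Set.exists_of_ssubset hss₁
    exact ⟨u, huJ, fun hc => huI ⟨huJ, hc⟩⟩
  obtain ⟨v, hv₂, hv₁⟩ : ∃ v, v ∈ J₂ ∧ v ∉ J₁ := by
    obtain ⟨v, hvJ, hvI⟩ := Set.exists_of_ssubset hss₂
    exact ⟨v, hvJ, fun hc => hvI ⟨hc, hvJ⟩⟩
  have hoJ₁ : J₁.OrdConnected := by
    rw [hJ₁]; exact isPreconnected_connectedComponentIn.ordConnected
  have hoJ₂ : J₂.OrdConnected := by
    rw [hJ₂]; exact isPreconnected_connectedComponentIn.ordConnected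
  have huz : u ≠ z := fun e => hu₂ (e ▸ hz₂)
  have hvz : v ≠ z := fun e => hv₁ (e ▸ hz₁)
  rcases huz.lt_or_gt with hu | hu <;> rcases hvz.lt_or_gt with hv | hv
  · -- u < z, v < z : compare u and v
    rcases lt_trichotomy u v with huv | huv | huv
    · exact hv₁ (hoJ₁.out hu₁ hz₁ ⟨le_of_lt huv, le_of_lt hv⟩)
    · exact hu₂ (huv ▸ hv₂)
    · exact hu₂ (hoJ₂.out hv₂ hz₂ ⟨le_of_lt huv, le_of_lt hu⟩)
  · -- u < z < v : swap roles of g and h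
    exact core h g hh hg hcomm'' z v u hzh hzg
      (hJ₂z ▸ hv₂) (hJ₁z ▸ hv₁) (hJ₁z ▸ hu₁) (hJ₂z ▸ hu₂) hv hu
  · -- v < z < u : main case
    exact core g h hg hh hcomm' z u v hzg hzh
      (hJ₁z ▸ hu₁) (hJ₂z ▸ hu₂) (hJ₂z ▸ hv₂) (hJ₁z ▸ hv₁) hu hv
  · -- z < u, z < v
    rcases lt_trichotomy u v with huv | huv | huv
    · exact hu₂ (hoJ₂.out hz₂ hv₂ ⟨le_of_lt hu, le_of_lt huv⟩)
    · exact hu₂ (huv ▸ hv₂)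
    · exact hv₁ (hoJ₁.out hz₁ hu₁ ⟨le_of_lt hv, le_of_lt huv⟩)
end

section
/- Let G ≤ Homeo₊(ℝ) and let U ⊆ ℝ be a G-invariant set. Then the action of G restricted to U is non-Conradian if and only if there exist elements g₁, g₂ ∈ G and components J₁ of supp g₁ and J₂ of supp g₂ such that {J₁, J₂} is a 2-chain and (J₁ ∪ J₂) ∩ U ≠ ∅. -/
/-- `f` and `g` are crossed on the invariant set `U`: there are `u < w < v` in `U`
with `gⁿ u < w < fⁿ v` for all `n : ℤ` and `g^N v < w < f^N u` for some `N : ℤ`. -/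
def CrossedOn (f g : Equiv.Perm ℝ) (U : Set ℝ) : Prop :=
  ∃ u ∈ U, ∃ w ∈ U, ∃ v ∈ U, u < w ∧ w < v ∧
    (∀ n : ℤ, (g ^ n) u < w ∧ w < (f ^ n) v) ∧
    (∃ N : ℤ, (g ^ N) v < w ∧ w < (f ^ N) u)


open Set

namespace S6


lemma strictMono_inv {g : Equiv.Perm ℝ} (hg : StrictMono (g : ℝ → ℝ)) :
    StrictMono ((g⁻¹ : Equiv.Perm ℝ) : ℝ → ℝ) := by
  intro a b hab
  by_contra h
  push_neg at h
  have h2 := hg.monotone h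
  simp only [Equiv.Perm.coe_inv, Equiv.apply_symm_apply] at h2
  linarith

lemma cont {g : Equiv.Perm ℝ} (hg : StrictMono (g : ℝ → ℝ)) : Continuous (g : ℝ → ℝ) :=
  (StrictMono.orderIsoOfSurjective _ hg g.surjective).continuous

lemma suppOf_inv (g : Equiv.Perm ℝ) : suppOf (g⁻¹ : Equiv.Perm ℝ) = suppOf g := by
  ext x
  simp only [suppOf, mem_setOf_eq]
  simp only [ne_eq, Equiv.Perm.inv_eq_iff_eq]
  exact not_congr eq_comm

lemma apply_mem_comp {g : Equiv.Perm ℝ} (hg : StrictMono (g : ℝ → ℝ)) {x : ℝ}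
    (hx : (g : ℝ → ℝ) x ≠ x) :
    (g : ℝ → ℝ) x ∈ connectedComponentIn (suppOf g) x := by
  have hxsupp : x ∈ suppOf ⇑g := hx
  rcases lt_or_gt_of_ne hx with h | h
  · have hsub : Icc ((g : ℝ → ℝ) x) x ⊆ suppOf ⇑g := by
      intro y ⟨hy1, hy2⟩ (hgy : (g : ℝ → ℝ) y = y)
      have h1 : (g : ℝ → ℝ) y ≤ (g : ℝ → ℝ) x := hg.monotone hy2
      have h2 : y = (g : ℝ → ℝ) x := le_antisymm (hgy ▸ h1) hy1
      have : (g : ℝ → ℝ) x = x := g.injective (by rw [← h2, hgy, h2])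
      exact hx this
    exact isPreconnected_Icc.subset_connectedComponentIn ⟨h.le, le_rfl⟩ hsub ⟨le_rfl, h.le⟩
  · have hsub : Icc x ((g : ℝ → ℝ) x) ⊆ suppOf ⇑g := by
      intro y ⟨hy1, hy2⟩ (hgy : (g : ℝ → ℝ) y = y)
      have h1 : (g : ℝ → ℝ) x ≤ (g : ℝ → ℝ) y := hg.monotone hy1
      have h2 : y = (g : ℝ → ℝ) x := le_antisymm hy2 (hgy ▸ h1)
      have : (g : ℝ → ℝ) x = x := g.injective (by rw [← h2, hgy, h2])
      exact hx this
    exact isPreconnected_Icc.subset_connectedComponentIn ⟨le_rfl, h.le⟩ hsub ⟨h.le, le_rfl⟩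

lemma apply_mem_comp' {g : Equiv.Perm ℝ} (hg : StrictMono (g : ℝ → ℝ)) {x₀ x : ℝ}
    (hx : x ∈ connectedComponentIn (suppOf g) x₀) :
    (g : ℝ → ℝ) x ∈ connectedComponentIn (suppOf g) x₀ := by
  by_cases hfix : (g : ℝ → ℝ) x = x
  · rw [hfix]; exact hx
  · rw [connectedComponentIn_eq hx]
    exact apply_mem_comp hg hfix


/-- members of a component stay in it under the inverse as well -/
lemma inv_apply_mem_comp' {g : Equiv.Perm ℝ} (hg : StrictMono (g : ℝ → ℝ)) {x₀ x : ℝ}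
    (hx : x ∈ connectedComponentIn (suppOf g) x₀) :
    ((g⁻¹ : Equiv.Perm ℝ) : ℝ → ℝ) x ∈ connectedComponentIn (suppOf g) x₀ := by
  rw [← suppOf_inv g] at hx ⊢
  exact apply_mem_comp' (strictMono_inv hg) hx

lemma step_below {g : Equiv.Perm ℝ} (hg : StrictMono (g : ℝ → ℝ)) {x₀ w x : ℝ}
    (hw : w ∈ connectedComponentIn (suppOf g) x₀)
    (hx1 : x < w) (hx2 : x ∉ connectedComponentIn (suppOf g) x₀) :
    (g : ℝ → ℝ) x < w ∧ (g : ℝ → ℝ) x ∉ connectedComponentIn (suppOf g) x₀ := by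
  by_cases hfix : (g : ℝ → ℝ) x = x
  · rw [hfix]; exact ⟨hx1, hx2⟩
  · have hxs : x ∈ suppOf ⇑g := hfix
    have hxK : x ∈ connectedComponentIn (suppOf ⇑g) x := mem_connectedComponentIn hxs
    have hgxK : (g : ℝ → ℝ) x ∈ connectedComponentIn (suppOf ⇑g) x :=
      apply_mem_comp' hg hxK
    have hKJ : ∀ y ∈ connectedComponentIn (suppOf ⇑g) x,
        y ∉ connectedComponentIn (suppOf ⇑g) x₀ := by
      intro y hy hy'
      have e1 : connectedComponentIn (suppOf ⇑g) x = connectedComponentIn (suppOf ⇑g) y :=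
        connectedComponentIn_eq hy
      have e2 : connectedComponentIn (suppOf ⇑g) x₀ = connectedComponentIn (suppOf ⇑g) y :=
        connectedComponentIn_eq hy'
      exact hx2 (e2 ▸ e1 ▸ hxK)
    refine ⟨?_, hKJ _ hgxK⟩
    by_contra hge
    push_neg at hge
    have hoc : OrdConnected (connectedComponentIn (suppOf ⇑g) x) :=
      isPreconnected_connectedComponentIn.ordConnected
    have : w ∈ connectedComponentIn (suppOf ⇑g) x :=
      hoc.out hxK hgxK ⟨hx1.le, hge⟩
    exact hKJ w this hw

lemma step_above {g : Equiv.Perm ℝ} (hg : StrictMono (g : ℝ → ℝ)) {x₀ w x : ℝ}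
    (hw : w ∈ connectedComponentIn (suppOf g) x₀)
    (hx1 : w < x) (hx2 : x ∉ connectedComponentIn (suppOf g) x₀) :
    w < (g : ℝ → ℝ) x ∧ (g : ℝ → ℝ) x ∉ connectedComponentIn (suppOf g) x₀ := by
  by_cases hfix : (g : ℝ → ℝ) x = x
  · rw [hfix]; exact ⟨hx1, hx2⟩
  · have hxs : x ∈ suppOf ⇑g := hfix
    have hxK : x ∈ connectedComponentIn (suppOf ⇑g) x := mem_connectedComponentIn hxs
    have hgxK : (g : ℝ → ℝ) x ∈ connectedComponentIn (suppOf ⇑g) x := by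
      exact apply_mem_comp' hg hxK
    have hKJ : ∀ y ∈ connectedComponentIn (suppOf ⇑g) x,
        y ∉ connectedComponentIn (suppOf ⇑g) x₀ := by
      intro y hy hy'
      have e1 : connectedComponentIn (suppOf ⇑g) x = connectedComponentIn (suppOf ⇑g) y :=
        connectedComponentIn_eq hy
      have e2 : connectedComponentIn (suppOf ⇑g) x₀ = connectedComponentIn (suppOf ⇑g) y :=
        connectedComponentIn_eq hy'
      exact hx2 (e2 ▸ e1 ▸ hxK)
    refine ⟨?_, hKJ _ hgxK⟩
    by_contra hge
    push_neg at hge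
    have hoc : OrdConnected (connectedComponentIn (suppOf ⇑g) x) :=
      isPreconnected_connectedComponentIn.ordConnected
    have : w ∈ connectedComponentIn (suppOf ⇑g) x :=
      hoc.out hgxK hxK ⟨hge, hx1.le⟩
    exact hKJ w this hw

/-- predicate invariant under g and g⁻¹ is invariant under all integer powers -/
lemma zpow_invariant {g : Equiv.Perm ℝ} (P : ℝ → Prop)
    (h1 : ∀ x, P x → P ((g : ℝ → ℝ) x))
    (h2 : ∀ x, P x → P (((g⁻¹ : Equiv.Perm ℝ)) x))
    {x : ℝ} (hx : P x) : ∀ n : ℤ, P (((g ^ n : Equiv.Perm ℝ)) x) := by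
  intro n
  induction n using Int.induction_on with
  | zero => simpa using hx
  | succ k ih =>
      have : (g ^ ((k : ℤ) + 1) : Equiv.Perm ℝ) = g * g ^ (k : ℤ) := by
        rw [add_comm, zpow_add, zpow_one]
      rw [this, Equiv.Perm.mul_apply]
      exact h1 _ ih
  | pred k ih =>
      have : (g ^ (-(k : ℤ) - 1) : Equiv.Perm ℝ) = g⁻¹ * g ^ (-(k : ℤ)) := by
        rw [sub_eq_add_neg, add_comm, zpow_add, zpow_neg_one]
      rw [this, Equiv.Perm.mul_apply]
      exact h2 _ ih

lemma dichotomy {g : Equiv.Perm ℝ} (hg : StrictMono (g : ℝ → ℝ)) {J : Set ℝ}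
    (hJ : IsPreconnected J) (hsupp : J ⊆ suppOf g) :
    (∀ x ∈ J, x < (g : ℝ → ℝ) x) ∨ (∀ x ∈ J, (g : ℝ → ℝ) x < x) := by
  by_contra hcon
  push_neg at hcon
  obtain ⟨⟨b, hbJ, hb⟩, ⟨a, haJ, ha⟩⟩ := hcon
  have hA : IsOpen {x : ℝ | x < (g : ℝ → ℝ) x} := isOpen_lt continuous_id (cont hg)
  have hB : IsOpen {x : ℝ | (g : ℝ → ℝ) x < x} := isOpen_lt (cont hg) continuous_id
  have hcover : J ⊆ {x : ℝ | x < (g : ℝ → ℝ) x} ∪ {x : ℝ | (g : ℝ → ℝ) x < x} := by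
    intro y hy
    rcases lt_or_gt_of_ne (hsupp hy : (g : ℝ → ℝ) y ≠ y) with h | h
    · exact Or.inr h
    · exact Or.inl h
  have haA : a ∈ {x : ℝ | x < (g : ℝ → ℝ) x} := lt_of_le_of_ne ha (fun h => hsupp haJ h.symm)
  have hbB : b ∈ {x : ℝ | (g : ℝ → ℝ) x < x} := lt_of_le_of_ne hb (fun h => hsupp hbJ h)
  obtain ⟨z, _, hz1, hz2⟩ := hJ _ _ hA hB hcover ⟨a, haJ, haA⟩ ⟨b, hbJ, hbB⟩
  exact absurd (lt_trans hz1 hz2) (lt_irrefl z)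

lemma flip_right {g : Equiv.Perm ℝ} (hg : StrictMono (g : ℝ → ℝ)) {J : Set ℝ}
    (h : ∀ x ∈ J, (g : ℝ → ℝ) x < x) :
    ∀ x ∈ J, x < ((g⁻¹ : Equiv.Perm ℝ) : ℝ → ℝ) x := by
  intro x hx
  by_contra hc
  push_neg at hc
  have := hg.monotone hc
  rw [Equiv.Perm.coe_inv, Equiv.apply_symm_apply] at this
  exact absurd (lt_of_le_of_lt this (h x hx)) (lt_irrefl x)

lemma flip_left {g : Equiv.Perm ℝ} (hg : StrictMono (g : ℝ → ℝ)) {J : Set ℝ}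
    (h : ∀ x ∈ J, x < (g : ℝ → ℝ) x) :
    ∀ x ∈ J, ((g⁻¹ : Equiv.Perm ℝ) : ℝ → ℝ) x < x := by
  intro x hx
  by_contra hc
  push_neg at hc
  have := hg.monotone hc
  rw [Equiv.Perm.coe_inv, Equiv.apply_symm_apply] at this
  exact absurd (lt_of_lt_of_le (h x hx) this) (lt_irrefl x)

lemma orbit_mem {g : Equiv.Perm ℝ} {J : Set ℝ} (hinv : ∀ x ∈ J, (g : ℝ → ℝ) x ∈ J)
    {x : ℝ} (hx : x ∈ J) : ∀ k : ℕ, ((g ^ k : Equiv.Perm ℝ)) x ∈ J := by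
  intro k
  induction k with
  | zero => simpa using hx
  | succ n ih =>
      rw [pow_succ', Equiv.Perm.mul_apply]
      exact hinv _ ih

lemma escape_right {g : Equiv.Perm ℝ} (hg : StrictMono (g : ℝ → ℝ))
    (hg' : StrictMono ((g⁻¹ : Equiv.Perm ℝ) : ℝ → ℝ)) {J : Set ℝ}
    (hJoc : J.OrdConnected)
    (hmove : ∀ x ∈ J, x < (g : ℝ → ℝ) x) (hinv : ∀ x ∈ J, (g : ℝ → ℝ) x ∈ J)
    {x w : ℝ} (hx : x ∈ J) (hw : w ∈ J) : ∃ k : ℕ, w < ((g ^ k : Equiv.Perm ℝ)) x := by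
  by_contra hcon
  push_neg at hcon
  have horb := orbit_mem hinv hx
  set L := sSup (range fun k : ℕ => ((g ^ k : Equiv.Perm ℝ)) x) with hL
  have hne : (range fun k : ℕ => ((g ^ k : Equiv.Perm ℝ)) x).Nonempty := ⟨_, mem_range_self 0⟩
  have hbdd : BddAbove (range fun k : ℕ => ((g ^ k : Equiv.Perm ℝ)) x) := by
    refine ⟨w, ?_⟩
    rintro _ ⟨k, rfl⟩
    exact hcon k
  have hxL : x ≤ L := by
    have := le_csSup hbdd (mem_range_self 0)
    simpa using this
  have hLw : L ≤ w := csSup_le hne (by rintro _ ⟨k, rfl⟩; exact hcon k)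
  have hLJ : L ∈ J := hJoc.out hx hw ⟨hxL, hLw⟩
  have hmoveL : L < (g : ℝ → ℝ) L := hmove L hLJ
  have hinvL : ((g⁻¹ : Equiv.Perm ℝ)) L < L := by
    have := hg' hmoveL
    rwa [Equiv.Perm.coe_inv, Equiv.symm_apply_apply, ← Equiv.Perm.coe_inv] at this
  obtain ⟨_, ⟨k, rfl⟩, hk⟩ := exists_lt_of_lt_csSup hne hinvL
  have hstep : L < ((g ^ (k + 1) : Equiv.Perm ℝ)) x := by
    have := hg hk
    rw [Equiv.Perm.coe_inv, Equiv.apply_symm_apply] at this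
    rwa [pow_succ', Equiv.Perm.mul_apply]
  exact absurd (lt_of_lt_of_le hstep (le_csSup hbdd (mem_range_self (k + 1)))) (lt_irrefl L)

lemma escape_left {g : Equiv.Perm ℝ} (hg : StrictMono (g : ℝ → ℝ))
    (hg' : StrictMono ((g⁻¹ : Equiv.Perm ℝ) : ℝ → ℝ)) {J : Set ℝ}
    (hJoc : J.OrdConnected)
    (hmove : ∀ x ∈ J, (g : ℝ → ℝ) x < x) (hinv : ∀ x ∈ J, (g : ℝ → ℝ) x ∈ J)
    {x w : ℝ} (hx : x ∈ J) (hw : w ∈ J) : ∃ k : ℕ, ((g ^ k : Equiv.Perm ℝ)) x < w := by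
  by_contra hcon
  push_neg at hcon
  have horb := orbit_mem hinv hx
  set L := sInf (range fun k : ℕ => ((g ^ k : Equiv.Perm ℝ)) x) with hL
  have hne : (range fun k : ℕ => ((g ^ k : Equiv.Perm ℝ)) x).Nonempty := ⟨_, mem_range_self 0⟩
  have hbdd : BddBelow (range fun k : ℕ => ((g ^ k : Equiv.Perm ℝ)) x) := by
    refine ⟨w, ?_⟩
    rintro _ ⟨k, rfl⟩
    exact hcon k
  have hxL : L ≤ x := by
    have := csInf_le hbdd (mem_range_self 0)
    simpa using this
  have hLw : w ≤ L := le_csInf hne (by rintro _ ⟨k, rfl⟩; exact hcon k)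
  have hLJ : L ∈ J := hJoc.out hw hx ⟨hLw, hxL⟩
  have hmoveL : (g : ℝ → ℝ) L < L := hmove L hLJ
  have hinvL : L < ((g⁻¹ : Equiv.Perm ℝ)) L := by
    have := hg' hmoveL
    rwa [Equiv.Perm.coe_inv, Equiv.symm_apply_apply, ← Equiv.Perm.coe_inv] at this
  obtain ⟨_, ⟨k, rfl⟩, hk⟩ := exists_lt_of_csInf_lt hne hinvL
  have hstep : ((g ^ (k + 1) : Equiv.Perm ℝ)) x < L := by
    have := hg hk
    rw [Equiv.Perm.coe_inv, Equiv.apply_symm_apply] at this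
    rwa [pow_succ', Equiv.Perm.mul_apply]
  exact absurd (lt_of_le_of_lt (csInf_le hbdd (mem_range_self (k + 1))) hstep) (lt_irrefl L)

lemma orbit_antitone {g : Equiv.Perm ℝ} {J : Set ℝ}
    (hmove : ∀ x ∈ J, (g : ℝ → ℝ) x < x) (hinv : ∀ x ∈ J, (g : ℝ → ℝ) x ∈ J)
    {x : ℝ} (hx : x ∈ J) : Antitone (fun k : ℕ => ((g ^ k : Equiv.Perm ℝ)) x) := by
  apply antitone_nat_of_succ_le
  intro n
  rw [pow_succ', Equiv.Perm.mul_apply]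
  exact (hmove _ (orbit_mem hinv hx n)).le

lemma orbit_monotone {g : Equiv.Perm ℝ} {J : Set ℝ}
    (hmove : ∀ x ∈ J, x < (g : ℝ → ℝ) x) (hinv : ∀ x ∈ J, (g : ℝ → ℝ) x ∈ J)
    {x : ℝ} (hx : x ∈ J) : Monotone (fun k : ℕ => ((g ^ k : Equiv.Perm ℝ)) x) := by
  apply monotone_nat_of_le_succ
  intro n
  rw [pow_succ', Equiv.Perm.mul_apply]
  exact (hmove _ (orbit_mem hinv hx n)).le


lemma backward_aux (G : Subgroup (Equiv.Perm ℝ))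
    (hmono : ∀ g ∈ G, StrictMono (g : ℝ → ℝ))
    (U : Set ℝ) (hU : ∀ g ∈ G, (g : ℝ → ℝ) '' U = U)
    (f g : Equiv.Perm ℝ) (hfG : f ∈ G) (hgG : g ∈ G) (y₁ y₂ : ℝ)
    (hJg : ∀ x ∈ connectedComponentIn (suppOf g) y₁, (g : ℝ → ℝ) x < x)
    (hKf : ∀ x ∈ connectedComponentIn (suppOf f) y₂, x < (f : ℝ → ℝ) x)
    (s m t : ℝ) (hsm : s < m) (hmt : m < t)
    (hsK : s ∈ connectedComponentIn (suppOf f) y₂)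
    (hsJ : s ∉ connectedComponentIn (suppOf g) y₁)
    (hmJ : m ∈ connectedComponentIn (suppOf g) y₁)
    (hmK : m ∈ connectedComponentIn (suppOf f) y₂)
    (htJ : t ∈ connectedComponentIn (suppOf g) y₁)
    (htK : t ∉ connectedComponentIn (suppOf f) y₂)
    (p : ℝ) (hpU : p ∈ U)
    (hp : p ∈ connectedComponentIn (suppOf g) y₁ ∪ connectedComponentIn (suppOf f) y₂) :
    CrossedOn f g U := by
  set J := connectedComponentIn (suppOf g) y₁ with hJdef
  set K := connectedComponentIn (suppOf f) y₂ with hKdef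
  have hgmono := hmono g hgG
  have hfmono := hmono f hfG
  have hgmono' := strictMono_inv hgmono
  have hfmono' := strictMono_inv hfmono
  have hJoc : J.OrdConnected := isPreconnected_connectedComponentIn.ordConnected
  have hKoc : K.OrdConnected := isPreconnected_connectedComponentIn.ordConnected
  have hJinv : ∀ x ∈ J, (g : ℝ → ℝ) x ∈ J := fun x hx => apply_mem_comp' hgmono hx
  have hJinv' : ∀ x ∈ J, ((g⁻¹ : Equiv.Perm ℝ)) x ∈ J := fun x hx =>
    inv_apply_mem_comp' hgmono hx
  have hKinv : ∀ x ∈ K, (f : ℝ → ℝ) x ∈ K := fun x hx => apply_mem_comp' hfmono hx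
  have hKinv' : ∀ x ∈ K, ((f⁻¹ : Equiv.Perm ℝ)) x ∈ K := fun x hx =>
    inv_apply_mem_comp' hfmono hx
  have hmapU : ∀ h ∈ G, ∀ x ∈ U, (h : Equiv.Perm ℝ) x ∈ U := by
    intro h hh x hx
    rw [← hU h hh]
    exact mem_image_of_mem _ hx
  -- produce w ∈ U ∩ J ∩ K with s < w < t
  obtain ⟨w, hwU, hwJ, hwK, hsw, hwt⟩ :
      ∃ w, w ∈ U ∧ w ∈ J ∧ w ∈ K ∧ s < w ∧ w < t := by
    rcases hp with hpJ | hpK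
    · obtain ⟨k, hk⟩ := escape_left hgmono hgmono' hJoc hJg hJinv hpJ hmJ
      refine ⟨((g ^ k : Equiv.Perm ℝ)) p, hmapU _ (pow_mem hgG k) _ hpU, ?_, ?_, ?_, ?_⟩
      · exact orbit_mem hJinv hpJ k
      · -- ∈ K : in (s, m) ⊆ K ; first show > s
        have hgt : s < ((g ^ k : Equiv.Perm ℝ)) p := by
          by_contra hc
          push_neg at hc
          exact hsJ (hJoc.out (orbit_mem hJinv hpJ k) htJ ⟨hc, (hsm.trans hmt).le⟩)
        exact hKoc.out hsK hmK ⟨hgt.le, hk.le⟩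
      · by_contra hc
        push_neg at hc
        exact hsJ (hJoc.out (orbit_mem hJinv hpJ k) htJ ⟨hc, (hsm.trans hmt).le⟩)
      · exact hk.trans hmt
    · obtain ⟨k, hk⟩ := escape_right hfmono hfmono' hKoc hKf hKinv hpK hmK
      refine ⟨((f ^ k : Equiv.Perm ℝ)) p, hmapU _ (pow_mem hfG k) _ hpU, ?_, ?_, ?_, ?_⟩
      · -- ∈ J: in (m, t) ⊆ J
        have hlt : ((f ^ k : Equiv.Perm ℝ)) p < t := by
          by_contra hc
          push_neg at hc
          exact htK (hKoc.out hsK (orbit_mem hKinv hpK k) ⟨(hsm.trans hmt).le, hc⟩)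
        exact hJoc.out hmJ htJ ⟨hk.le, hlt.le⟩
      · exact orbit_mem hKinv hpK k
      · exact hsm.trans hk
      · by_contra hc
        push_neg at hc
        exact htK (hKoc.out hsK (orbit_mem hKinv hpK k) ⟨(hsm.trans hmt).le, hc⟩)
  -- produce u
  have hKf' : ∀ x ∈ K, ((f⁻¹ : Equiv.Perm ℝ)) x < x := flip_left hfmono hKf
  have hKinv'' : ∀ x ∈ K, ((f⁻¹ : Equiv.Perm ℝ)) x ∈ K := hKinv'
  obtain ⟨k₁, hk₁⟩ := escape_left hfmono' (by simpa using hfmono) hKoc hKf' hKinv'' hwK hsK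
  set u := ((f⁻¹ ^ k₁ : Equiv.Perm ℝ)) w with hudef
  have huK : u ∈ K := orbit_mem hKinv'' hwK k₁
  have huU : u ∈ U := hmapU _ (pow_mem (inv_mem hfG) k₁) _ hwU
  have hus : u < s := hk₁
  have huJ : u ∉ J := by
    intro hc
    exact hsJ (hJoc.out hc htJ ⟨hus.le, (hsm.trans hmt).le⟩)
  -- produce v
  have hJg' : ∀ x ∈ J, x < ((g⁻¹ : Equiv.Perm ℝ)) x := flip_right hgmono hJg
  obtain ⟨k₂, hk₂⟩ := escape_right hgmono' (by simpa using hgmono) hJoc hJg' hJinv' hwJ htJ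
  set v := ((g⁻¹ ^ k₂ : Equiv.Perm ℝ)) w with hvdef
  have hvJ : v ∈ J := orbit_mem hJinv' hwJ k₂
  have hvU : v ∈ U := hmapU _ (pow_mem (inv_mem hgG) k₂) _ hwU
  have htv : t < v := hk₂
  have hvK : v ∉ K := by
    intro hc
    exact htK (hKoc.out hsK hc ⟨(hsm.trans hmt).le, htv.le⟩)
  -- conclusion
  have hwJ' : w ∈ connectedComponentIn (suppOf g) y₁ := hwJ
  have hwK' : w ∈ connectedComponentIn (suppOf f) y₂ := hwK
  refine ⟨u, huU, w, hwU, v, hvU, hus.trans hsw, hwt.trans htv, ?_, ?_⟩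
  · intro n
    constructor
    · have := zpow_invariant (g := g) (fun x => x < w ∧ x ∉ J)
        (fun x hx => step_below hgmono hwJ' hx.1 hx.2)
        (fun x hx => by
          have hw2 : w ∈ connectedComponentIn (suppOf (g⁻¹ : Equiv.Perm ℝ)) y₁ := by
            rw [suppOf_inv]; exact hwJ'
          have := step_below hgmono' hw2 hx.1 (by rw [suppOf_inv]; exact hx.2)
          rw [suppOf_inv] at this
          exact this)
        ⟨hus.trans hsw, huJ⟩ n
      exact this.1
    · have := zpow_invariant (g := f) (fun x => w < x ∧ x ∉ K)
        (fun x hx => step_above hfmono hwK' hx.1 hx.2)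
        (fun x hx => by
          have hw2 : w ∈ connectedComponentIn (suppOf (f⁻¹ : Equiv.Perm ℝ)) y₂ := by
            rw [suppOf_inv]; exact hwK'
          have := step_above hfmono' hw2 hx.1 (by rw [suppOf_inv]; exact hx.2)
          rw [suppOf_inv] at this
          exact this)
        ⟨hwt.trans htv, hvK⟩ n
      exact this.1
  · obtain ⟨a, ha⟩ := escape_left hgmono hgmono' hJoc hJg hJinv hvJ hwJ
    obtain ⟨b, hb⟩ := escape_right hfmono hfmono' hKoc hKf hKinv huK hwK
    refine ⟨((max a b : ℕ) : ℤ), ?_, ?_⟩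
    · have h1 : ((g ^ (max a b) : Equiv.Perm ℝ)) v ≤ ((g ^ a : Equiv.Perm ℝ)) v :=
        orbit_antitone hJg hJinv hvJ (le_max_left a b)
      have : ((g ^ ((max a b : ℕ) : ℤ) : Equiv.Perm ℝ)) v < w := by
        rw [zpow_natCast]
        exact lt_of_le_of_lt h1 ha
      exact this
    · have h1 : ((f ^ b : Equiv.Perm ℝ)) u ≤ ((f ^ (max a b) : Equiv.Perm ℝ)) u :=
        orbit_monotone hKf hKinv huK (le_max_right a b)
      have : w < ((f ^ ((max a b : ℕ) : ℤ) : Equiv.Perm ℝ)) u := by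
        rw [zpow_natCast]
        exact lt_of_lt_of_le hb h1
      exact this


/-- choose an orientation: a left-mover whose component at x₀ is that of g -/
lemma choose_left (G : Subgroup (Equiv.Perm ℝ))
    (hmono : ∀ g ∈ G, StrictMono (g : ℝ → ℝ))
    {g : Equiv.Perm ℝ} (hg : g ∈ G) {x₀ : ℝ} (hx : (g : ℝ → ℝ) x₀ ≠ x₀) :
    ∃ g' ∈ G, connectedComponentIn (suppOf g') x₀ = connectedComponentIn (suppOf g) x₀ ∧
      ∀ x ∈ connectedComponentIn (suppOf g) x₀, (g' : ℝ → ℝ) x < x := by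
  have hsupp : x₀ ∈ suppOf ⇑g := hx
  rcases dichotomy (hmono g hg) (isPreconnected_connectedComponentIn
      (F := suppOf ⇑g) (x := x₀)) (connectedComponentIn_subset _ _) with h | h
  · exact ⟨g⁻¹, inv_mem hg, by rw [suppOf_inv], flip_left (hmono g hg) h⟩
  · exact ⟨g, hg, rfl, h⟩

lemma choose_right (G : Subgroup (Equiv.Perm ℝ))
    (hmono : ∀ g ∈ G, StrictMono (g : ℝ → ℝ))
    {g : Equiv.Perm ℝ} (hg : g ∈ G) {x₀ : ℝ} (hx : (g : ℝ → ℝ) x₀ ≠ x₀) :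
    ∃ g' ∈ G, connectedComponentIn (suppOf g') x₀ = connectedComponentIn (suppOf g) x₀ ∧
      ∀ x ∈ connectedComponentIn (suppOf g) x₀, x < (g' : ℝ → ℝ) x := by
  have hsupp : x₀ ∈ suppOf ⇑g := hx
  rcases dichotomy (hmono g hg) (isPreconnected_connectedComponentIn
      (F := suppOf ⇑g) (x := x₀)) (connectedComponentIn_subset _ _) with h | h
  · exact ⟨g, hg, rfl, h⟩
  · exact ⟨g⁻¹, inv_mem hg, by rw [suppOf_inv], flip_right (hmono g hg) h⟩


end S6

/-- the restriction of `G` to a `G`-invariant set `U` is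
non-Conradian if and only if there is a 2-chain of components of supports of
elements of `G` whose union meets `U`. -/
theorem stmt6 (G : Subgroup (Equiv.Perm ℝ))
    (hmono : ∀ g ∈ G, StrictMono (g : ℝ → ℝ))
    (U : Set ℝ) (hU : ∀ g ∈ G, (g : ℝ → ℝ) '' U = U) :
    (∃ f ∈ G, ∃ g ∈ G, CrossedOn f g U) ↔
    (∃ g₁ ∈ G, ∃ g₂ ∈ G, ∃ x₁ x₂ : ℝ,
      (g₁ : ℝ → ℝ) x₁ ≠ x₁ ∧ (g₂ : ℝ → ℝ) x₂ ≠ x₂ ∧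
      TwoChain (connectedComponentIn (suppOf g₁) x₁)
        (connectedComponentIn (suppOf g₂) x₂) ∧
      ((connectedComponentIn (suppOf g₁) x₁
        ∪ connectedComponentIn (suppOf g₂) x₂) ∩ U).Nonempty) := by
  constructor
  · -- forward
    rintro ⟨f, hfG, g, hgG, u, huU, w, hwU, v, hvU, huw, hwv, hall, N, hN1, hN2⟩
    set F : Equiv.Perm ℝ := f ^ N with hFdef
    set Gg : Equiv.Perm ℝ := g ^ N with hGdef
    have hFG : F ∈ G := zpow_mem hfG N
    have hGG : Gg ∈ G := zpow_mem hgG N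
    have hFmono := hmono F hFG
    have hGmono := hmono Gg hGG
    have hFu : (F : ℝ → ℝ) u ≠ u := by
      have : w < (F : ℝ → ℝ) u := hN2
      exact fun h => absurd (h ▸ this) (not_lt.mpr (le_of_lt huw))
    have hGv : (Gg : ℝ → ℝ) v ≠ v := by
      have : (Gg : ℝ → ℝ) v < w := hN1
      exact fun h => absurd (h ▸ this) (not_lt.mpr (le_of_lt hwv))
    set B := connectedComponentIn (suppOf F) u with hBdef
    set A := connectedComponentIn (suppOf Gg) v with hAdef
    have huB : u ∈ B := mem_connectedComponentIn hFu
    have hvA : v ∈ A := mem_connectedComponentIn hGv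
    have hBoc : B.OrdConnected := isPreconnected_connectedComponentIn.ordConnected
    have hAoc : A.OrdConnected := isPreconnected_connectedComponentIn.ordConnected
    have hmoveB : ∀ x ∈ B, x < (F : ℝ → ℝ) x := by
      rcases S6.dichotomy hFmono (isPreconnected_connectedComponentIn
          (F := suppOf ⇑F) (x := u)) (connectedComponentIn_subset _ _) with h | h
      · exact h
      · exact absurd (h u huB) (not_lt.mpr (le_of_lt (huw.trans hN2)))
    have hmoveA : ∀ x ∈ A, (Gg : ℝ → ℝ) x < x := by
      rcases S6.dichotomy hGmono (isPreconnected_connectedComponentIn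
          (F := suppOf ⇑Gg) (x := v)) (connectedComponentIn_subset _ _) with h | h
      · exact absurd (h v hvA) (not_lt.mpr (le_of_lt (hN1.trans hwv)))
      · exact h
    have hwB : w ∈ B := hBoc.out huB (S6.apply_mem_comp' hFmono huB) ⟨huw.le, hN2.le⟩
    have hwA : w ∈ A := hAoc.out (S6.apply_mem_comp' hGmono hvA) hvA ⟨hN1.le, hwv.le⟩
    have huA : u ∉ A := by
      intro huA
      obtain ⟨k, hk⟩ := S6.escape_right (S6.strictMono_inv hGmono)
        (by simpa using hGmono) hAoc (S6.flip_right hGmono hmoveA)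
        (fun x hx => S6.inv_apply_mem_comp' hGmono hx) huA hwA
      have hpow : (Gg⁻¹ ^ k : Equiv.Perm ℝ) = g ^ (-(N * (k : ℤ))) := by
        rw [hGdef, inv_pow, ← zpow_natCast (g ^ N) k, ← zpow_mul, ← zpow_neg]
      rw [hpow] at hk
      exact absurd hk (not_lt.mpr (le_of_lt (hall (-(N * (k : ℤ)))).1))
    have hvB : v ∉ B := by
      intro hvB
      obtain ⟨k, hk⟩ := S6.escape_left (S6.strictMono_inv hFmono)
        (by simpa using hFmono) hBoc (S6.flip_left hFmono hmoveB)
        (fun x hx => S6.inv_apply_mem_comp' hFmono hx) hvB hwB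
      have hpow : (F⁻¹ ^ k : Equiv.Perm ℝ) = f ^ (-(N * (k : ℤ))) := by
        rw [hFdef, inv_pow, ← zpow_natCast (f ^ N) k, ← zpow_mul, ← zpow_neg]
      rw [hpow] at hk
      exact absurd hk (not_lt.mpr (le_of_lt (hall (-(N * (k : ℤ)))).2))
    refine ⟨F, hFG, Gg, hGG, u, v, hFu, hGv,
      ⟨⟨w, hwB, hwA⟩, ?_, ?_⟩, ⟨w, Or.inl hwB, hwU⟩⟩
    · exact (Set.ssubset_iff_of_subset Set.inter_subset_left).mpr
        ⟨u, huB, fun h => huA h.2⟩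
    · exact (Set.ssubset_iff_of_subset Set.inter_subset_right).mpr
        ⟨v, hvA, fun h => hvB h.1⟩
  · -- backward
    rintro ⟨g₁, h₁, g₂, h₂, x₁, x₂, hx₁, hx₂, ⟨⟨m, hm₁, hm₂⟩, hss₁, hss₂⟩, ⟨p, hpJK, hpU⟩⟩
    obtain ⟨t, htJ₁, ht'⟩ := Set.exists_of_ssubset hss₁
    have htJ₂ : t ∉ connectedComponentIn (suppOf g₂) x₂ := fun h => ht' ⟨htJ₁, h⟩
    obtain ⟨s, hsJ₂, hs'⟩ := Set.exists_of_ssubset hss₂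
    have hsJ₁ : s ∉ connectedComponentIn (suppOf g₁) x₁ := fun h => hs' ⟨h, hsJ₂⟩
    have hoc₁ : (connectedComponentIn (suppOf g₁) x₁).OrdConnected :=
      isPreconnected_connectedComponentIn.ordConnected
    have hoc₂ : (connectedComponentIn (suppOf g₂) x₂).OrdConnected :=
      isPreconnected_connectedComponentIn.ordConnected
    rcases lt_trichotomy s m with hsm | hsm | hsm
    · -- s < m ; then m < t
      have hmt : m < t := by
        rcases lt_trichotomy m t with h | h | h
        · exact h
        · exact absurd (h ▸ hm₂) htJ₂
        · -- t < m : derive contradiction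
          exfalso
          have hst : s < t := by
            rcases lt_trichotomy s t with h' | h' | h'
            · exact h'
            · exact absurd (h' ▸ hsJ₂) (fun hh => htJ₂ hh)
            · exact absurd (hoc₁.out htJ₁ hm₁ ⟨h'.le, hsm.le⟩) hsJ₁
          exact htJ₂ (hoc₂.out hsJ₂ hm₂ ⟨hst.le, h.le⟩)
      obtain ⟨g, hgG, hgcomp, hgmove⟩ := S6.choose_left G hmono h₁ hx₁
      obtain ⟨f, hfG, hfcomp, hfmove⟩ := S6.choose_right G hmono h₂ hx₂
      refine ⟨f, hfG, g, hgG, S6.backward_aux G hmono U hU f g hfG hgG x₁ x₂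
        (by rw [hgcomp]; exact hgmove) (by rw [hfcomp]; exact hfmove)
        s m t hsm hmt (hfcomp ▸ hsJ₂) (hgcomp ▸ hsJ₁) (hgcomp ▸ hm₁) (hfcomp ▸ hm₂)
        (hgcomp ▸ htJ₁) (hfcomp ▸ htJ₂) p hpU (by rw [hgcomp, hfcomp]; exact hpJK)⟩
    · exact absurd (hsm ▸ hm₁) hsJ₁
    · -- m < s ; then t < m, swap roles
      have htm : t < m := by
        rcases lt_trichotomy t m with h | h | h
        · exact h
        · exact absurd (by rw [h]; exact hm₂ : t ∈ connectedComponentIn (suppOf g₂) x₂) htJ₂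
        · exfalso
          rcases lt_trichotomy s t with h' | h' | h'
          · exact hsJ₁ (hoc₁.out hm₁ htJ₁ ⟨hsm.le, h'.le⟩)
          · exact htJ₂ (h' ▸ hsJ₂)
          · exact htJ₂ (hoc₂.out hm₂ hsJ₂ ⟨h.le, h'.le⟩)
      obtain ⟨g, hgG, hgcomp, hgmove⟩ := S6.choose_left G hmono h₂ hx₂
      obtain ⟨f, hfG, hfcomp, hfmove⟩ := S6.choose_right G hmono h₁ hx₁
      refine ⟨f, hfG, g, hgG, S6.backward_aux G hmono U hU f g hfG hgG x₂ x₁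
        (by rw [hgcomp]; exact hgmove) (by rw [hfcomp]; exact hfmove)
        t m s htm hsm (hfcomp ▸ htJ₁) (hgcomp ▸ htJ₂) (hgcomp ▸ hm₂) (hfcomp ▸ hm₁)
        (hgcomp ▸ hsJ₂) (hfcomp ▸ hsJ₁) p hpU
        (by rw [hgcomp, hfcomp, Set.union_comm]; exact hpJK)⟩
end

section
/- Let G ≤ Homeo₊(ℝ). If G has a pair of elements f, g and an interval J which is a connected component of supp f such that g(∂J) ∩ J ≠ ∅, then G has a pair of elements (f', g') and points a < b in ℝ with f'(a) = a < f'(b) < g'(a) < g'(b) = b. -/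
namespace Stmt7Aux

open Set

lemma symm_strictMono (f : Equiv.Perm ℝ) (hf : StrictMono ⇑f) : StrictMono ⇑f.symm := by
  intro a b h
  have h' : f (f.symm a) < f (f.symm b) := by simpa using h
  exact hf.lt_iff_lt.mp h'

lemma symm_fixed (f : Equiv.Perm ℝ) {c : ℝ} (hfc : f c = c) : f.symm c = c := by
  conv_lhs => rw [← hfc]
  exact f.symm_apply_apply c

lemma iterate_pos (f : Equiv.Perm ℝ) (hf : StrictMono ⇑f) {c : ℝ} (hfc : f c = c) :
    ∀ (k : ℕ) (x : ℝ), c < x → c < (⇑f.symm)^[k] x := by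
  intro k
  induction k with
  | zero => intro x hx; simpa using hx
  | succ n ih =>
    intro x hx
    rw [Function.iterate_succ_apply']
    have h1 : c < (⇑f.symm)^[n] x := ih x hx
    have := symm_strictMono f hf h1
    rwa [symm_fixed f hfc] at this

/-- Orbit of `f.symm` starting in `(c, t]` eventually goes below any `β > c`,
provided `f > id` on `(c, t]` and `f c = c`. Pure order-theoretic argument. -/
lemma orbit_lt (f : Equiv.Perm ℝ) (hf : StrictMono ⇑f) {c t : ℝ} (hfc : f c = c)
    (h3 : ∀ x, c < x → x ≤ t → x < f x) :
    ∀ x, c < x → x ≤ t → ∀ β, c < β → ∃ k, (⇑f.symm)^[k] x < β := by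
  intro x hcx hxt β hcβ
  have hfs := symm_strictMono f hf
  have hfsc : f.symm c = c := symm_fixed f hfc
  set o : ℕ → ℝ := fun k => (⇑f.symm)^[k] x with ho
  have hinv : ∀ k, c < o k ∧ o k ≤ t := by
    intro k
    induction k with
    | zero => exact ⟨hcx, hxt⟩
    | succ n ih =>
      have h1 : o n < f (o n) := h3 _ ih.1 ih.2
      have h2 : f.symm (o n) < o n := by
        have := hfs h1; rwa [Equiv.symm_apply_apply] at this
      have h4 : c < f.symm (o n) := by
        have := hfs ih.1; rwa [hfsc] at this
      have h5 : o (n + 1) = f.symm (o n) := Function.iterate_succ_apply' _ _ _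
      exact ⟨by rw [h5]; exact h4, by rw [h5]; exact le_trans h2.le ih.2⟩
  by_contra hcon
  push_neg at hcon
  have hbdd : BddBelow (Set.range o) := ⟨β, by rintro _ ⟨k, rfl⟩; exact hcon k⟩
  set L := ⨅ k, o k with hL
  have hβL : β ≤ L := le_ciInf hcon
  have hcL : c < L := lt_of_lt_of_le hcβ hβL
  have hL0 : L ≤ o 0 := ciInf_le hbdd 0
  have hLt : L ≤ t := le_trans hL0 hxt
  have hLf : L < f L := h3 _ hcL hLt
  obtain ⟨k, hk⟩ := exists_lt_of_ciInf_lt (show (⨅ k, o k) < f L from hLf)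
  have h6 : f.symm (o k) < L := by
    have := hfs hk; rwa [Equiv.symm_apply_apply] at this
  have h7 : L ≤ o (k + 1) := ciInf_le hbdd (k + 1)
  have h8 : o (k + 1) = f.symm (o k) := Function.iterate_succ_apply' _ _ _
  rw [h8] at h7
  exact absurd (lt_of_le_of_lt h7 h6) (lt_irrefl L)

/-- Core construction of a positive ping-pong pair. -/
lemma core (f g : Equiv.Perm ℝ) (hf : StrictMono ⇑f) (hg : StrictMono ⇑g)
    {c : ℝ} (hfc : f c = c) (hcu : c < g c) (hu : g c < f (g c))
    (h3 : ∀ x, c < x → x ≤ f (g c) → x < f x) :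
    ∃ M N : ℕ, ∃ a b : ℝ, a < b ∧
      ((f⁻¹ ^ M : Equiv.Perm ℝ) : ℝ → ℝ) a = a ∧
      a < ((f⁻¹ ^ M : Equiv.Perm ℝ) : ℝ → ℝ) b ∧
      ((f⁻¹ ^ M : Equiv.Perm ℝ) : ℝ → ℝ) b < ((g * f⁻¹ ^ N : Equiv.Perm ℝ) : ℝ → ℝ) a ∧
      ((g * f⁻¹ ^ N : Equiv.Perm ℝ) : ℝ → ℝ) a < ((g * f⁻¹ ^ N : Equiv.Perm ℝ) : ℝ → ℝ) b ∧
      ((g * f⁻¹ ^ N : Equiv.Perm ℝ) : ℝ → ℝ) b = b := by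
  have hfs := symm_strictMono f hf
  have hgs := symm_strictMono g hg
  have hfsc : f.symm c = c := symm_fixed f hfc
  set u := g c with hu_def
  set x₁ := f u with hx₁_def
  have hcx₁ : c < x₁ := lt_trans hcu hu
  -- choose N
  have hβ : c < g.symm x₁ := by
    have := hgs hu; rwa [Equiv.symm_apply_apply] at this
  obtain ⟨k, hk⟩ := orbit_lt f hf hfc h3 u hcu hu.le (g.symm x₁) hβ
  set N := k + 1 with hN_def
  have hsymm_x₁ : f.symm x₁ = u := by rw [hx₁_def, Equiv.symm_apply_apply]
  have hψx₁ : g ((⇑f.symm)^[N] x₁) < x₁ := by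
    rw [hN_def, Function.iterate_succ_apply, hsymm_x₁]
    have := hg hk
    rwa [Equiv.apply_symm_apply] at this
  set ψ : ℝ → ℝ := fun x => g ((⇑f.symm)^[N] x) with hψ_def
  have hψmono : Monotone ψ := by
    intro a b hab
    exact (hg.monotone (((hfs.monotone).iterate N) hab))
  have hψc : ψ c = u := by
    show g ((⇑f.symm)^[N] c) = u
    rw [Function.iterate_fixed hfsc N]
  -- fixed point of ψ via sSup
  set S : Set ℝ := {x | x ∈ Icc c x₁ ∧ x ≤ ψ x} with hS_def
  have hcS : c ∈ S := ⟨⟨le_refl c, hcx₁.le⟩, by rw [hψc]; exact hcu.le⟩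
  have hbddS : BddAbove S := ⟨x₁, fun x hx => hx.1.2⟩
  have hSne : S.Nonempty := ⟨c, hcS⟩
  set w := sSup S with hw_def
  have hcw' : c ≤ w := le_csSup hbddS hcS
  have hwx₁ : w ≤ x₁ := csSup_le hSne (fun x hx => hx.1.2)
  have hwψ : w ≤ ψ w := csSup_le hSne (fun x hx => le_trans hx.2 (hψmono (le_csSup hbddS hx)))
  have hψwS : ψ w ∈ S := by
    refine ⟨⟨?_, ?_⟩, hψmono hwψ⟩
    · calc c ≤ u := hcu.le
        _ = ψ c := hψc.symm
        _ ≤ ψ w := hψmono hcw'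
    · exact le_trans (hψmono hwx₁) hψx₁.le
  have hψw : ψ w = w := le_antisymm (le_csSup hbddS hψwS) hwψ
  have hcw : c < w := by
    rcases lt_or_eq_of_le hcw' with h | h
    · exact h
    · exfalso
      have hcc : ψ c = c := by rw [h]; exact hψw
      rw [hψc] at hcc
      exact absurd hcc (ne_of_gt hcu)
  have huw : u < w := by
    have h1 : c < (⇑f.symm)^[N] w := iterate_pos f hf hfc N w hcw
    have := hg h1
    rw [show g ((⇑f.symm)^[N] w) = ψ w from rfl, hψw] at this
    exact this
  -- choose M
  obtain ⟨M, hM⟩ := orbit_lt f hf hfc h3 w hcw hwx₁ u hcu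
  -- coercion computations
  have hco1 : ∀ x : ℝ, ((f⁻¹ ^ M : Equiv.Perm ℝ) : ℝ → ℝ) x = (⇑f.symm)^[M] x := by
    intro x; rw [Equiv.Perm.coe_pow]; rfl
  have hco2 : ∀ x : ℝ, ((g * f⁻¹ ^ N : Equiv.Perm ℝ) : ℝ → ℝ) x = ψ x := by
    intro x; rfl
  refine ⟨M, N, c, w, hcw, ?_, ?_, ?_, ?_, ?_⟩
  · rw [hco1]; exact Function.iterate_fixed hfsc M
  · rw [hco1]; exact iterate_pos f hf hfc M w hcw
  · rw [hco1, hco2, hψc]; exact hM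
  · rw [hco2, hco2, hψc, hψw]; exact huw
  · rw [hco2]; exact hψw

lemma cont_of_strictMono (h : Equiv.Perm ℝ) (hm : StrictMono ⇑h) : Continuous ⇑h := by
  have := (StrictMono.orderIsoOfSurjective ⇑h hm h.surjective).continuous
  rwa [StrictMono.coe_orderIsoOfSurjective] at this

end Stmt7Aux

/-- if some `f, g ∈ G` and a component `J` of `supp f` satisfy
`g(∂J) ∩ J ≠ ∅`, then `G` contains a positive ping-pong pair: elements `f', g'`
and points `a < b` with `f'(a) = a < f'(b) < g'(a) < g'(b) = b`. -/
theorem stmt7 (G : Subgroup (Equiv.Perm ℝ))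
    (hmono : ∀ g ∈ G, StrictMono (g : ℝ → ℝ))
    (f : Equiv.Perm ℝ) (hf : f ∈ G) (g : Equiv.Perm ℝ) (hg : g ∈ G)
    (x₀ : ℝ) (hx₀ : f x₀ ≠ x₀)
    (hcross : ∃ p ∈ frontier (connectedComponentIn (suppOf f) x₀),
      g p ∈ connectedComponentIn (suppOf f) x₀) :
    ∃ f' ∈ G, ∃ g' ∈ G, ∃ a b : ℝ, a < b ∧
      (f' : ℝ → ℝ) a = a ∧ a < (f' : ℝ → ℝ) b ∧
      (f' : ℝ → ℝ) b < (g' : ℝ → ℝ) a ∧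
      (g' : ℝ → ℝ) a < (g' : ℝ → ℝ) b ∧ (g' : ℝ → ℝ) b = b := by
  classical
  open Set Stmt7Aux in
  obtain ⟨p, hpfr, hq⟩ := hcross
  have hfmono : StrictMono ⇑f := hmono f hf
  have hgmono : StrictMono ⇑g := hmono g hg
  have hfcont : Continuous ⇑f := cont_of_strictMono f hfmono
  have hSopen : IsOpen (suppOf ⇑f) := isOpen_ne_fun hfcont continuous_id
  set J := connectedComponentIn (suppOf ⇑f) x₀ with hJ
  have hx₀S : x₀ ∈ suppOf ⇑f := hx₀
  have hJopen : IsOpen J := hSopen.connectedComponentIn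
  have hJconn : IsConnected J := isConnected_connectedComponentIn_iff.mpr hx₀S
  have hJord : OrdConnected J := hJconn.isPreconnected.ordConnected
  have hJsub : J ⊆ suppOf ⇑f := connectedComponentIn_subset _ _
  have hpJ : p ∉ J := by
    rw [hJopen.frontier_eq] at hpfr
    exact hpfr.2
  have hpcl : p ∈ closure J := by
    rw [hJopen.frontier_eq] at hpfr
    exact hpfr.1
  have hfp : f p = p := by
    by_contra hne
    have hpS : p ∈ suppOf ⇑f := hne
    have hUopen : IsOpen (connectedComponentIn (suppOf ⇑f) p) := hSopen.connectedComponentIn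
    have hpU : p ∈ connectedComponentIn (suppOf ⇑f) p := mem_connectedComponentIn hpS
    obtain ⟨y, hyU, hyJ⟩ := _root_.mem_closure_iff.mp hpcl _ hUopen hpU
    have h1 := connectedComponentIn_eq hyU
    have h2 := connectedComponentIn_eq hyJ
    exact hpJ (by rw [hJ, h2, ← h1]; exact hpU)
  set q := g p with hq_def
  have hqS : q ∈ suppOf ⇑f := hJsub hq
  have hqp : q ≠ p := by
    intro h
    exact hqS (by rw [h]; exact hfp)
  -- sign dichotomy on J
  have hsign : (∀ x ∈ J, x < f x) ∨ (∀ x ∈ J, f x < x) := by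
    by_contra hcon
    push_neg at hcon
    obtain ⟨⟨y, hyJ, hy⟩, ⟨z, hzJ, hz⟩⟩ := hcon
    have hy' : f y < y := lt_of_le_of_ne hy (hJsub hyJ)
    have hz' : z < f z := lt_of_le_of_ne hz (Ne.symm (hJsub hzJ))
    have hcontsub : ContinuousOn (fun t => f t - t) (Icc (min y z) (max y z)) :=
      (hfcont.sub continuous_id).continuousOn
    have hicc : Icc (min y z) (max y z) ⊆ J := by
      rcases le_total y z with h | h
      · rw [min_eq_left h, max_eq_right h]; exact hJord.out hyJ hzJ
      · rw [min_eq_right h, max_eq_left h]; exact hJord.out hzJ hyJ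
    rcases le_total y z with h | h
    · have := intermediate_value_Icc h ((hfcont.sub continuous_id).continuousOn)
      have h0 : (0:ℝ) ∈ Icc (f y - y) (f z - z) := ⟨by linarith, by linarith⟩
      obtain ⟨t, htIcc, ht⟩ := this h0
      have htJ : t ∈ J := hJord.out hyJ hzJ htIcc
      exact hJsub htJ (by have ht' : f t - t = 0 := ht; linarith)
    · have := intermediate_value_Icc' h ((hfcont.sub continuous_id).continuousOn)
      have h0 : (0:ℝ) ∈ Icc (f y - y) (f z - z) := ⟨by linarith, by linarith⟩
      obtain ⟨t, htIcc, ht⟩ := this h0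
      have htJ : t ∈ J := hJord.out hzJ hyJ htIcc
      exact hJsub htJ (by have ht' : f t - t = 0 := ht; linarith)
  -- segment lemmas from closure point p
  have hseg : ∀ α ∈ J, ∀ x, p < x → x ≤ α → x ∈ J := by
    intro α hα x hpx hxα
    obtain ⟨j, hjlt, hjJ⟩ := _root_.mem_closure_iff.mp hpcl (Iio x) isOpen_Iio hpx
    exact hJord.out hjJ hα ⟨hjlt.le, hxα⟩
  have hseg' : ∀ α ∈ J, ∀ x, α ≤ x → x < p → x ∈ J := by
    intro α hα x hαx hxp
    obtain ⟨j, hjgt, hjJ⟩ := _root_.mem_closure_iff.mp hpcl (Ioi x) isOpen_Ioi hxp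
    exact hJord.out hα hjJ ⟨hαx, hjgt.le⟩
  -- generic: if F.symm q ∈ J and F maps supp f into itself then F q ∈ J
  have himg : ∀ F : Equiv.Perm ℝ, StrictMono ⇑F →
      (∀ y ∈ suppOf ⇑f, F y ∈ suppOf ⇑f) → F.symm q ∈ J → F q ∈ J := by
    intro F hFm hFsupp hFsq
    have hFcont : Continuous ⇑F := cont_of_strictMono F hFm
    have himgconn : IsConnected (⇑F '' J) := hJconn.image _ hFcont.continuousOn
    have hsubS : ⇑F '' J ⊆ suppOf ⇑f := by
      rintro _ ⟨y, hyJ, rfl⟩; exact hFsupp y (hJsub hyJ)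
    have hqimg : q ∈ ⇑F '' J := ⟨F.symm q, hFsq, F.apply_symm_apply q⟩
    have hunion : IsPreconnected (⇑F '' J ∪ J) :=
      (IsConnected.union ⟨q, hqimg, hq⟩ himgconn hJconn).isPreconnected
    have hsub2 : ⇑F '' J ∪ J ⊆ suppOf ⇑f := union_subset hsubS hJsub
    have hkey := hunion.subset_connectedComponentIn (Or.inr hq : q ∈ ⇑F '' J ∪ J) hsub2
    have hcciq : connectedComponentIn (suppOf ⇑f) q = J := by
      rw [hJ]; exact (connectedComponentIn_eq hq).symm
    have : F q ∈ connectedComponentIn (suppOf ⇑f) q :=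
      hkey (Or.inl ⟨q, hq, rfl⟩)
    rwa [hcciq] at this
  rcases lt_or_gt_of_ne hqp with hqltp | hpltq
  · -- case q < p : mirror case, use conjugation by negation
    -- choose F with F < id on J
    obtain ⟨F, hFG, hFm, hFp, hFneg, hFsupp⟩ :
        ∃ F : Equiv.Perm ℝ, F ∈ G ∧ StrictMono ⇑F ∧ F p = p ∧ (∀ x ∈ J, F x < x) ∧
          (∀ y ∈ suppOf ⇑f, F y ∈ suppOf ⇑f) := by
      rcases hsign with hpos | hneg
      · refine ⟨f⁻¹, inv_mem hf, hmono _ (inv_mem hf), ?_, ?_, ?_⟩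
        · show f.symm p = p; exact Stmt7Aux.symm_fixed f hfp
        · intro x hx
          have := symm_strictMono f hfmono (hpos x hx)
          rwa [Equiv.symm_apply_apply] at this
        · intro y hy
          show f (f.symm y) ≠ f.symm y
          rw [Equiv.apply_symm_apply]
          intro h
          exact hy ((congrArg ⇑f h).trans (f.apply_symm_apply y))
      · exact ⟨f, hf, hfmono, hfp, hneg, fun y hy h => hy (f.injective h)⟩
    have hFq : F q < q := hFneg q hq
    have hFsq : F.symm q ∈ J := by
      have h1 : q < F.symm q := by
        have := symm_strictMono F hFm hFq
        rwa [Equiv.symm_apply_apply] at this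
      have h2 : F.symm q < p := by
        have := symm_strictMono F hFm hqltp
        rwa [Stmt7Aux.symm_fixed F hFp] at this
      exact hseg' q hq _ h1.le h2
    have hFqJ : F q ∈ J := himg F hFm hFsupp hFsq
    -- conjugate by negation
    set r : Equiv.Perm ℝ := Equiv.neg ℝ with hr_def
    have hr_apply : ∀ x : ℝ, r x = -x := fun x => rfl
    have hrinv_apply : ∀ x : ℝ, (r⁻¹ : Equiv.Perm ℝ) x = -x := fun x => rfl
    set Ft := r * F * r⁻¹ with hFt_def
    set gt' := r * g * r⁻¹ with hgt_def
    have hFt_apply : ∀ x : ℝ, Ft x = -(F (-x)) := fun x => rfl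
    have hgt_apply : ∀ x : ℝ, gt' x = -(g (-x)) := fun x => rfl
    have hFtm : StrictMono ⇑Ft := by
      intro a b hab
      rw [hFt_apply, hFt_apply]
      exact neg_lt_neg (hFm (neg_lt_neg hab))
    have hgtm : StrictMono ⇑gt' := by
      intro a b hab
      rw [hgt_apply, hgt_apply]
      exact neg_lt_neg (hgmono (neg_lt_neg hab))
    have hFtc : Ft (-p) = -p := by rw [hFt_apply, neg_neg, hFp]
    have hgtc : gt' (-p) = -q := by rw [hgt_apply, neg_neg, ← hq_def]
    have hcu : -p < gt' (-p) := by rw [hgtc]; exact neg_lt_neg hqltp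
    have hFtq : Ft (gt' (-p)) = -(F q) := by rw [hgtc, hFt_apply, neg_neg]
    have hu : gt' (-p) < Ft (gt' (-p)) := by
      rw [hFtq, hgtc]; exact neg_lt_neg hFq
    have h3 : ∀ x, -p < x → x ≤ Ft (gt' (-p)) → x < Ft x := by
      intro x h1 h2
      rw [hFtq] at h2
      rw [hFt_apply]
      have hyJ : -x ∈ J := hseg' (F q) hFqJ (-x) (by linarith) (by linarith)
      have := hFneg (-x) hyJ
      linarith
    obtain ⟨M, N, A, B, hAB, h1, h2, h3', h4, h5⟩ := core Ft gt' hFtm hgtm hFtc hcu hu h3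
    -- translate back
    have hrr : r⁻¹ = r := rfl
    have hFtinv : Ft⁻¹ = r * F⁻¹ * r⁻¹ := by
      rw [hFt_def]
      group
    have hconjpow : Ft⁻¹ ^ M = r * F⁻¹ ^ M * r⁻¹ := by rw [hFtinv]; exact conj_pow
    have hconjpowN : Ft⁻¹ ^ N = r * F⁻¹ ^ N * r⁻¹ := by rw [hFtinv]; exact conj_pow
    have hmulconj : gt' * Ft⁻¹ ^ N = r * (g * F⁻¹ ^ N) * r⁻¹ := by
      rw [hgt_def, hconjpowN]
      group
    have hc1 : ∀ x : ℝ, ((Ft⁻¹ ^ M : Equiv.Perm ℝ) : ℝ → ℝ) x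
        = -(((F⁻¹ ^ M : Equiv.Perm ℝ) : ℝ → ℝ) (-x)) := by
      intro x; rw [hconjpow]; rfl
    have hc2 : ∀ x : ℝ, ((gt' * Ft⁻¹ ^ N : Equiv.Perm ℝ) : ℝ → ℝ) x
        = -(((g * F⁻¹ ^ N : Equiv.Perm ℝ) : ℝ → ℝ) (-x)) := by
      intro x; rw [hmulconj]; rfl
    simp only [hc1] at h1 h2 h3'
    simp only [hc2] at h3' h4 h5
    refine ⟨g * F⁻¹ ^ N, mul_mem hg (pow_mem (inv_mem hFG) N),
      F⁻¹ ^ M, pow_mem (inv_mem hFG) M, -B, -A, by linarith, by linarith, by linarith,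
      by linarith, by linarith, by linarith⟩
  · -- case p < q
    obtain ⟨F, hFG, hFm, hFp, hFpos, hFsupp⟩ :
        ∃ F : Equiv.Perm ℝ, F ∈ G ∧ StrictMono ⇑F ∧ F p = p ∧ (∀ x ∈ J, x < F x) ∧
          (∀ y ∈ suppOf ⇑f, F y ∈ suppOf ⇑f) := by
      rcases hsign with hpos | hneg
      · exact ⟨f, hf, hfmono, hfp, hpos, fun y hy h => hy (f.injective h)⟩
      · refine ⟨f⁻¹, inv_mem hf, hmono _ (inv_mem hf), ?_, ?_, ?_⟩
        · show f.symm p = p; exact Stmt7Aux.symm_fixed f hfp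
        · intro x hx
          have := symm_strictMono f hfmono (hneg x hx)
          rwa [Equiv.symm_apply_apply] at this
        · intro y hy
          show f (f.symm y) ≠ f.symm y
          rw [Equiv.apply_symm_apply]
          intro h
          exact hy ((congrArg ⇑f h).trans (f.apply_symm_apply y))
    have hFq : q < F q := hFpos q hq
    have hFsq : F.symm q ∈ J := by
      have h1 : F.symm q < q := by
        have := symm_strictMono F hFm hFq
        rwa [Equiv.symm_apply_apply] at this
      have h2 : p < F.symm q := by
        have := symm_strictMono F hFm hpltq
        rwa [Stmt7Aux.symm_fixed F hFp] at this
      exact hseg q hq _ h2 h1.le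
    have hFqJ : F q ∈ J := himg F hFm hFsupp hFsq
    have h3 : ∀ x, p < x → x ≤ F (g p) → x < F x := by
      intro x h1 h2
      exact hFpos x (hseg (F q) hFqJ x h1 h2)
    obtain ⟨M, N, a, b, hab, h1, h2, h3', h4, h5⟩ :=
      core F g hFm hgmono hFp (show p < g p from hpltq) (show g p < F (g p) from hFq) h3
    exact ⟨F⁻¹ ^ M, pow_mem (inv_mem hFG) M, g * F⁻¹ ^ N,
      mul_mem hg (pow_mem (inv_mem hFG) N), a, b, hab, h1, h2, h3', h4, h5⟩
end

section
/- Suppose a group G acting on ℝ by orientation-preserving homeomorphisms is Conradian, has no global fixed point, admits a G-invariant nontrivial Radon measure μ, and τ : G → ℝ is the associated translation-number character τ(g) := sign(g(x)−x)·μ[x, g(x)). Then τ is a group homomorphism independent of x, τ(g) > 0 if and only if g(x) > x for all x ∈ ℝ, and the commutator subgroup [G,G] is contained in ker τ = {g ∈ G : Fix g ≠ ∅}. -/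
open MeasureTheory

/-- `f` and `g` are crossed: there are `u < w < v` with `gⁿ u < w < fⁿ v`
for all `n : ℤ` and `g^N v < w < f^N u` for some `N : ℤ`. -/
def Crossed (f g : Equiv.Perm ℝ) : Prop :=
  ∃ u w v : ℝ, u < w ∧ w < v ∧
    (∀ n : ℤ, (g ^ n) u < w ∧ w < (f ^ n) v) ∧
    (∃ N : ℤ, (g ^ N) v < w ∧ w < (f ^ N) u)

/-- The translation-number character `τ_μ(g) := sign(g x − x) · μ [x, g x)`
associated to a measure `μ`, evaluated using the base point `x`. -/
noncomputable def transChar (μ : Measure ℝ) (g : Equiv.Perm ℝ) (x : ℝ) : ℝ :=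
  if x ≤ g x then (μ (Set.Ico x (g x))).toReal else -(μ (Set.Ico (g x) x)).toReal

/-! ### Auxiliary material -/

/-- The signed measure of the interval between `a` and `b`. -/
noncomputable def nuI (μ : Measure ℝ) (a b : ℝ) : ℝ :=
  (μ (Set.Ico a b)).toReal - (μ (Set.Ico b a)).toReal

lemma ico_ne_top (μ : Measure ℝ) [IsFiniteMeasureOnCompacts μ] (a b : ℝ) :
    μ (Set.Ico a b) ≠ ⊤ := measure_Ico_lt_top.ne

lemma ico_toReal_zero (μ : Measure ℝ) {a b : ℝ} (h : b ≤ a) :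
    (μ (Set.Ico a b)).toReal = 0 := by
  rw [Set.Ico_eq_empty (not_lt.2 h)]; simp

lemma transChar_eq_nuI (μ : Measure ℝ) (g : Equiv.Perm ℝ) (x : ℝ) :
    transChar μ g x = nuI μ x (g x) := by
  unfold transChar nuI
  rcases le_or_gt x (g x) with h | h
  · rw [if_pos h, ico_toReal_zero μ h]; ring
  · rw [if_neg (not_le.2 h), ico_toReal_zero μ h.le]; ring

lemma nuI_self (μ : Measure ℝ) (a : ℝ) : nuI μ a a = 0 := by
  simp [nuI]

lemma nuI_cocycle (μ : Measure ℝ) [IsFiniteMeasureOnCompacts μ] (a b c : ℝ) :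
    nuI μ a c = nuI μ a b + nuI μ b c := by
  have add3 : ∀ x y z : ℝ, x ≤ y → y ≤ z →
      (μ (Set.Ico x z)).toReal = (μ (Set.Ico x y)).toReal + (μ (Set.Ico y z)).toReal := by
    intro x y z h1 h2
    rw [← Set.Ico_union_Ico_eq_Ico h1 h2,
      measure_union Set.Ico_disjoint_Ico_same measurableSet_Ico,
      ENNReal.toReal_add (ico_ne_top μ x y) (ico_ne_top μ y z)]
  unfold nuI
  rcases le_total a b with hab | hab <;> rcases le_total b c with hbc | hbc
  · have h := add3 a b c hab hbc
    have h1 := ico_toReal_zero μ hab; have h2 := ico_toReal_zero μ hbc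
    have h3 := ico_toReal_zero μ (hab.trans hbc)
    linarith
  · rcases le_total a c with hac | hac
    · have h := add3 a c b hac hbc
      have h1 := ico_toReal_zero μ hac; have h2 := ico_toReal_zero μ hab
      have h3 := ico_toReal_zero μ hbc
      linarith
    · have h := add3 c a b hac hab
      have h1 := ico_toReal_zero μ hac; have h2 := ico_toReal_zero μ hab
      have h3 := ico_toReal_zero μ hbc
      linarith
  · rcases le_total a c with hac | hac
    · have h := add3 b a c hab hac
      have h1 := ico_toReal_zero μ hac; have h2 := ico_toReal_zero μ hab
      have h3 := ico_toReal_zero μ (hab.trans hac)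
      linarith
    · have h := add3 b c a hbc hac
      have h1 := ico_toReal_zero μ hac; have h2 := ico_toReal_zero μ hab
      have h3 := ico_toReal_zero μ hbc
      linarith
  · have h := add3 c b a hbc hab
    have h1 := ico_toReal_zero μ (hbc.trans hab); have h2 := ico_toReal_zero μ hab
    have h3 := ico_toReal_zero μ hbc
    linarith

lemma perm_continuous (g : Equiv.Perm ℝ) (hg : StrictMono (g : ℝ → ℝ)) :
    Continuous (g : ℝ → ℝ) :=
  (StrictMono.orderIsoOfSurjective (g : ℝ → ℝ) hg g.surjective).continuous

lemma measure_Ico_perm (μ : Measure ℝ) (g : Equiv.Perm ℝ) (hg : StrictMono (g : ℝ → ℝ))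
    (hinv : Measure.map (g : ℝ → ℝ) μ = μ) (a b : ℝ) :
    μ (Set.Ico ((g : ℝ → ℝ) a) (g b)) = μ (Set.Ico a b) := by
  have hc : Continuous (g : ℝ → ℝ) := perm_continuous g hg
  have hpre : (g : ℝ → ℝ) ⁻¹' (Set.Ico (g a) (g b)) = Set.Ico a b := by
    ext x; simp [Set.mem_Ico, hg.le_iff_le, hg.lt_iff_lt]
  calc μ (Set.Ico ((g : ℝ → ℝ) a) (g b))
      = (Measure.map (g : ℝ → ℝ) μ) (Set.Ico (g a) (g b)) := by rw [hinv]
    _ = μ ((g : ℝ → ℝ) ⁻¹' (Set.Ico (g a) (g b))) :=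
        Measure.map_apply hc.measurable measurableSet_Ico
    _ = μ (Set.Ico a b) := by rw [hpre]

/-- for a Conradian group `G` of orientation-preserving
homeomorphisms of `ℝ` without global fixed points, preserving a nontrivial Radon
measure `μ`, the translation character `τ_μ` is a homomorphism independent of the
base point, is positive exactly on the fixed-point-free positive elements, and
`[G,G] ≤ ker τ_μ = {g ∈ G : Fix g ≠ ∅}`. -/
theorem stmt9 (G : Subgroup (Equiv.Perm ℝ))
    (hmono : ∀ g ∈ G, StrictMono (g : ℝ → ℝ))
    (hconr : ¬ ∃ f ∈ G, ∃ g ∈ G, Crossed f g)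
    (hnofix : ∀ x : ℝ, ∃ g ∈ G, (g : ℝ → ℝ) x ≠ x)
    (μ : Measure ℝ) [IsFiniteMeasureOnCompacts μ] (hμ0 : μ ≠ 0)
    (hinv : ∀ g ∈ G, Measure.map (g : ℝ → ℝ) μ = μ) :
    (∀ g ∈ G, ∀ x y : ℝ, transChar μ g x = transChar μ g y) ∧
    (∀ g ∈ G, ∀ h ∈ G, transChar μ (g * h) 0 = transChar μ g 0 + transChar μ h 0) ∧
    (∀ g ∈ G, (0 < transChar μ g 0 ↔ ∀ x : ℝ, x < g x)) ∧
    (∀ g ∈ G, (transChar μ g 0 = 0 ↔ ∃ x : ℝ, (g : ℝ → ℝ) x = x)) ∧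
    (∀ g ∈ ⁅G, G⁆, transChar μ g 0 = 0) := by
  have hnu : ∀ g ∈ G, ∀ a b : ℝ, nuI μ ((g : ℝ → ℝ) a) (g b) = nuI μ a b := by
    intro g hg a b
    unfold nuI
    rw [measure_Ico_perm μ g (hmono g hg) (hinv g hg),
      measure_Ico_perm μ g (hmono g hg) (hinv g hg)]
  -- base point independence
  have hbase : ∀ g ∈ G, ∀ x y : ℝ, transChar μ g x = transChar μ g y := by
    intro g hg x y
    rw [transChar_eq_nuI, transChar_eq_nuI]
    have h1 := nuI_cocycle μ x y ((g : ℝ → ℝ) x)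
    have h2 := nuI_cocycle μ y ((g : ℝ → ℝ) y) ((g : ℝ → ℝ) x)
    have h3 := hnu g hg y x
    have h4 := nuI_cocycle μ x y x
    have h5 := nuI_self μ x
    linarith
  -- homomorphism
  have hhom : ∀ g ∈ G, ∀ h ∈ G, ∀ x : ℝ,
      transChar μ (g * h) x = transChar μ g x + transChar μ h x := by
    intro g hg h hh x
    rw [transChar_eq_nuI, transChar_eq_nuI, transChar_eq_nuI]
    have h1 : ((g * h : Equiv.Perm ℝ) : ℝ → ℝ) x = g (h x) := rfl
    rw [h1]
    have h2 := nuI_cocycle μ x ((h : ℝ → ℝ) x) ((g : ℝ → ℝ) ((h : ℝ → ℝ) x))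
    have h3 := hbase g hg ((h : ℝ → ℝ) x) x
    rw [transChar_eq_nuI, transChar_eq_nuI] at h3
    linarith
  have hone : transChar μ 1 0 = 0 := by
    rw [transChar_eq_nuI]
    have : ((1 : Equiv.Perm ℝ) : ℝ → ℝ) 0 = 0 := rfl
    rw [this, nuI_self]
  have hinv' : ∀ g ∈ G, transChar μ g⁻¹ 0 = - transChar μ g 0 := by
    intro g hg
    have h := hhom g hg g⁻¹ (inv_mem hg) 0
    rw [mul_inv_cancel, hone] at h
    linarith
  have hconts : ∀ g ∈ G, Continuous (g : ℝ → ℝ) := fun g hg =>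
    perm_continuous g (hmono g hg)
  -- positivity
  have hpos : ∀ g ∈ G, (∀ x : ℝ, x < g x) → 0 < transChar μ g 0 := by
    intro g hg hlt
    have h0 : (0 : ℝ) ≤ g 0 := (hlt 0).le
    have hform : transChar μ g 0 = (μ (Set.Ico 0 ((g : ℝ → ℝ) 0))).toReal := by
      unfold transChar; rw [if_pos h0]
    rw [hform]
    refine ENNReal.toReal_pos ?_ (ico_ne_top μ _ _)
    intro hzero
    apply hμ0
    -- every interval [a, g a) is null
    have hall : ∀ a : ℝ, μ (Set.Ico a ((g : ℝ → ℝ) a)) = 0 := by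
      intro a
      have hb := hbase g hg a 0
      unfold transChar at hb
      rw [if_pos (hlt a).le, if_pos h0] at hb
      have := (ENNReal.toReal_eq_toReal_iff' (ico_ne_top μ _ _) (ico_ne_top μ _ _)).mp hb
      rw [this, hzero]
    -- the orbit sequences
    set u : ℕ → ℝ := fun n => ((g ^ n : Equiv.Perm ℝ) : ℝ → ℝ) 0 with hu
    set v : ℕ → ℝ := fun n => ((g⁻¹ ^ n : Equiv.Perm ℝ) : ℝ → ℝ) 0 with hv
    have hu0 : u 0 = 0 := by simp [hu]
    have hv0 : v 0 = 0 := by simp [hv, Equiv.Perm.one_symm]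
    have hu_succ : ∀ n, u (n + 1) = g (u n) := by
      intro n
      show ((g ^ (n + 1) : Equiv.Perm ℝ) : ℝ → ℝ) 0 = g (((g ^ n : Equiv.Perm ℝ) : ℝ → ℝ) 0)
      rw [pow_succ']; rfl
    have hglt : ∀ x : ℝ, (g⁻¹ : Equiv.Perm ℝ) x < x := by
      intro x
      have := hlt ((g⁻¹ : Equiv.Perm ℝ) x)
      rwa [Equiv.Perm.inv_def, Equiv.apply_symm_apply] at this
    have hv_succ : ∀ n, v (n + 1) = g⁻¹ (v n) := by
      intro n
      show ((g⁻¹ ^ (n + 1) : Equiv.Perm ℝ) : ℝ → ℝ) 0 = g⁻¹ (((g⁻¹ ^ n : Equiv.Perm ℝ) : ℝ → ℝ) 0)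
      rw [pow_succ']; rfl
    have hu_mono : StrictMono u := strictMono_nat_of_lt_succ fun n => by
      rw [hu_succ]; exact hlt (u n)
    have hv_anti : StrictAnti v := strictAnti_nat_of_succ_lt fun n => by
      rw [hv_succ]; exact hglt (v n)
    have hu_nonneg : ∀ n, 0 ≤ u n := fun n => by
      rw [← hu0]; exact hu_mono.monotone (Nat.zero_le n)
    have hv_nonpos : ∀ n, v n ≤ 0 := fun n => by
      rw [← hv0]; exact hv_anti.antitone (Nat.zero_le n)
    -- escape to +∞
    have hup : ∀ b : ℝ, ∃ n, b ≤ u n := by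
      intro b
      by_contra hcon
      push_neg at hcon
      have hbdd : BddAbove (Set.range u) := ⟨b, by rintro _ ⟨n, rfl⟩; exact (hcon n).le⟩
      have htend : Filter.Tendsto u Filter.atTop (nhds (⨆ n, u n)) :=
        tendsto_atTop_ciSup hu_mono.monotone hbdd
      have h1 : Filter.Tendsto (fun n => u (n + 1)) Filter.atTop (nhds (⨆ n, u n)) :=
        htend.comp (Filter.tendsto_add_atTop_nat 1)
      have h2 : Filter.Tendsto (fun n => (g : ℝ → ℝ) (u n)) Filter.atTop
          (nhds ((g : ℝ → ℝ) (⨆ n, u n))) := ((hconts g hg).tendsto _).comp htend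
      have h3 : (⨆ n, u n) = (g : ℝ → ℝ) (⨆ n, u n) := by
        refine tendsto_nhds_unique ?_ h2
        simpa only [hu_succ] using h1
      exact absurd h3 (hlt (⨆ n, u n)).ne
    -- escape to -∞
    have hdown : ∀ b : ℝ, ∃ n, v n ≤ b := by
      intro b
      by_contra hcon
      push_neg at hcon
      have hbdd : BddBelow (Set.range v) := ⟨b, by rintro _ ⟨n, rfl⟩; exact (hcon n).le⟩
      have htend : Filter.Tendsto v Filter.atTop (nhds (⨅ n, v n)) :=
        tendsto_atTop_ciInf hv_anti.antitone hbdd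
      have h1 : Filter.Tendsto (fun n => v (n + 1)) Filter.atTop (nhds (⨅ n, v n)) :=
        htend.comp (Filter.tendsto_add_atTop_nat 1)
      have h2 : Filter.Tendsto (fun n => (g⁻¹ : Equiv.Perm ℝ) (v n)) Filter.atTop
          (nhds ((g⁻¹ : Equiv.Perm ℝ) (⨅ n, v n))) :=
        ((hconts g⁻¹ (inv_mem hg)).tendsto _).comp htend
      have h3 : (⨅ n, v n) = (g⁻¹ : Equiv.Perm ℝ) (⨅ n, v n) := by
        refine tendsto_nhds_unique ?_ h2
        simpa only [hv_succ] using h1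
      exact absurd h3.symm (hglt (⨅ n, v n)).ne
    -- all the pieces are null
    have hIcoU : ∀ n, μ (Set.Ico 0 (u n)) = 0 := by
      intro n
      induction n with
      | zero => rw [hu0]; simp
      | succ n ih =>
        rw [← Set.Ico_union_Ico_eq_Ico (hu_nonneg n) (hu_mono (Nat.lt_succ_self n)).le]
        exact measure_union_null ih (by rw [hu_succ]; exact hall (u n))
    have hIcoV : ∀ n, μ (Set.Ico (v n) 0) = 0 := by
      intro n
      induction n with
      | zero => rw [hv0]; simp
      | succ n ih =>
        rw [← Set.Ico_union_Ico_eq_Ico (hv_anti (Nat.lt_succ_self n)).le (hv_nonpos n)]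
        refine measure_union_null ?_ ih
        have := hall ((g⁻¹ : Equiv.Perm ℝ) (v n))
        rwa [Equiv.Perm.inv_def, Equiv.apply_symm_apply, ← Equiv.Perm.inv_def, ← hv_succ] at this
    have hcover : (Set.univ : Set ℝ) ⊆ ⋃ n, Set.Ico (v n) (u n) := by
      intro y _
      obtain ⟨n1, hn1⟩ := hup y
      obtain ⟨n2, hn2⟩ := hdown y
      refine Set.mem_iUnion.2 ⟨max (n1 + 1) n2, ?_, ?_⟩
      · exact le_trans (hv_anti.antitone (le_max_right _ _)) hn2
      · exact lt_of_le_of_lt hn1 (lt_of_lt_of_le (hu_mono (Nat.lt_succ_self n1))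
          (hu_mono.monotone (le_max_left _ _)))
    have huniv : μ Set.univ = 0 := by
      refine measure_mono_null hcover (measure_iUnion_null fun n => ?_)
      rw [← Set.Ico_union_Ico_eq_Ico (hv_nonpos n) (hu_nonneg n)]
      exact measure_union_null (hIcoV n) (hIcoU n)
    exact Measure.measure_univ_eq_zero.mp huniv
  -- fixed point gives zero
  have hfix0 : ∀ g ∈ G, (∃ x : ℝ, (g : ℝ → ℝ) x = x) → transChar μ g 0 = 0 := by
    rintro g hg ⟨x, hx⟩
    rw [hbase g hg 0 x, transChar_eq_nuI, hx, nuI_self]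
  -- negativity
  have hneg : ∀ g ∈ G, (∀ x : ℝ, (g : ℝ → ℝ) x < x) → transChar μ g 0 < 0 := by
    intro g hg hlt
    have h1 : ∀ x : ℝ, x < (g⁻¹ : Equiv.Perm ℝ) x := by
      intro x
      have := hlt ((g⁻¹ : Equiv.Perm ℝ) x)
      rwa [Equiv.Perm.inv_def, Equiv.apply_symm_apply] at this
    have h2 := hpos g⁻¹ (inv_mem hg) h1
    have h3 := hinv' g hg
    linarith
  -- trichotomy for fixed-point-free elements
  have htri : ∀ g ∈ G, (¬ ∃ x : ℝ, (g : ℝ → ℝ) x = x) →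
      (∀ x : ℝ, x < g x) ∨ (∀ x : ℝ, (g : ℝ → ℝ) x < x) := by
    intro g hg hnf
    push_neg at hnf
    have hc2 : Continuous (fun t : ℝ => (g : ℝ → ℝ) t - t) :=
      (hconts g hg).sub continuous_id
    rcases lt_or_gt_of_ne (hnf 0) with h0 | h0
    · right
      intro x
      by_contra hx
      push_neg at hx
      have hx' : x < (g : ℝ → ℝ) x := lt_of_le_of_ne hx (Ne.symm (hnf x))
      have hmem : (0 : ℝ) ∈ Set.Icc ((g : ℝ → ℝ) 0 - 0) ((g : ℝ → ℝ) x - x) :=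
        ⟨by linarith, by linarith⟩
      obtain ⟨z, hz⟩ := intermediate_value_univ 0 x hc2 hmem
      exact hnf z (by simpa using sub_eq_zero.mp hz)
    · left
      intro x
      by_contra hx
      push_neg at hx
      have hx' : (g : ℝ → ℝ) x < x := lt_of_le_of_ne hx (hnf x)
      have hmem : (0 : ℝ) ∈ Set.Icc ((g : ℝ → ℝ) x - x) ((g : ℝ → ℝ) 0 - 0) :=
        ⟨by linarith, by linarith⟩
      obtain ⟨z, hz⟩ := intermediate_value_univ x 0 hc2 hmem
      exact hnf z (by simpa using sub_eq_zero.mp hz)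
  -- zero iff fixed point
  have hzerofix : ∀ g ∈ G, (transChar μ g 0 = 0 ↔ ∃ x : ℝ, (g : ℝ → ℝ) x = x) := by
    intro g hg
    constructor
    · intro h0
      by_contra hnf
      rcases htri g hg hnf with h | h
      · exact absurd h0 (ne_of_gt (hpos g hg h))
      · exact absurd h0 (ne_of_lt (hneg g hg h))
    · exact hfix0 g hg
  refine ⟨hbase, fun g hg h hh => hhom g hg h hh 0, ?_, hzerofix, ?_⟩
  · -- positivity iff
    intro g hg
    constructor
    · intro hτ
      have hnf : ¬ ∃ x : ℝ, (g : ℝ → ℝ) x = x := by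
        intro hfix
        exact absurd ((hzerofix g hg).mpr hfix) (ne_of_gt hτ)
      rcases htri g hg hnf with h | h
      · exact h
      · exact absurd hτ (not_lt.2 (hneg g hg h).le)
    · exact hpos g hg
  · -- commutator subgroup
    intro g hg
    let K : Subgroup (Equiv.Perm ℝ) :=
      { carrier := {f : Equiv.Perm ℝ | f ∈ G ∧ transChar μ f 0 = 0}
        one_mem' := ⟨one_mem G, hone⟩
        mul_mem' := by
          rintro f1 f2 ⟨m1, e1⟩ ⟨m2, e2⟩
          exact ⟨mul_mem m1 m2, by rw [hhom f1 m1 f2 m2 0, e1, e2]; ring⟩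
        inv_mem' := by
          rintro f ⟨m1, e1⟩
          exact ⟨inv_mem m1, by rw [hinv' f m1, e1]; ring⟩ }
    have hK : ⁅G, G⁆ ≤ K := by
      rw [Subgroup.commutator_le]
      intro p hp q hq
      refine ⟨?_, ?_⟩
      · rw [commutatorElement_def]
        exact mul_mem (mul_mem (mul_mem hp hq) (inv_mem hp)) (inv_mem hq)
      · have m1 : p * q * p⁻¹ ∈ G := mul_mem (mul_mem hp hq) (inv_mem hp)
        rw [commutatorElement_def, hhom _ m1 _ (inv_mem hq) 0,
          hhom _ (mul_mem hp hq) _ (inv_mem hp) 0, hhom _ hp _ hq 0,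
          hinv' p hp, hinv' q hq]
        ring
    exact (hK hg).2
end

section
/- Let k ≥ 2 be an integer and τ > 0 with τ(1+τ)^{k−2} ≥ u for some u ∈ (0,1]. Suppose intervals J₁ ⊋ J₂ ⊋ ⋯ ⊋ J_k, maps w_n, and constants N satisfy: for each i = 2,…,k−1 and each n ≥ 0 there is a C^{1,τ} diffeomorphism s fixing w_n(J_{i−1}) setwise with s(w_n(J_i)) ∩ w_n(J_i) = ∅ and [Ds]_τ ≤ N − 1. Then for each n, |w_n(J_{k−1})| ≤ N^{2^{k−2}−1} |w_n(J₁)|^{(1+τ)^{k−2}}. -/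
/-- The length of a bounded set of reals. -/
noncomputable def lenOf (S : Set ℝ) : ℝ := sSup S - sInf S

open Set

lemma imgIoo {f : ℝ → ℝ} (hm : StrictMono f) (hc : Continuous f) (a b : ℝ) (hab : a ≤ b) :
    f '' Set.Ioo a b = Set.Ioo (f a) (f b) :=
  Set.Subset.antisymm hm.image_Ioo_subset (intermediate_value_Ioo hab hc.continuousOn)

lemma lenIoo (a b : ℝ) (h : a < b) : lenOf (Set.Ioo a b) = b - a := by
  rw [lenOf, csSup_Ioo h, csInf_Ioo h]

/-- The key one-step estimate: a `C^{1,τ}` diffeo fixing `Ioo A B` setwise and moving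
`Ioo a b ⊆ Ioo A B` off itself forces `b - a ≤ H * (B - A) ^ (1 + τ)`. -/
lemma stepEst {s s' : ℝ → ℝ} (hd : ∀ x, HasDerivAt s (s' x) x) (hm : StrictMono s)
    {H τ : ℝ} (hH : 0 ≤ H) (hτ : 0 < τ)
    (hHol : ∀ x y, |s' x - s' y| ≤ H * |x - y| ^ τ)
    {A B a b : ℝ} (hAB : A < B) (hab : a < b)
    (hsub : Set.Ioo a b ⊆ Set.Ioo A B)
    (hfix : s '' Set.Ioo A B = Set.Ioo A B)
    (hdisj : (s '' Set.Ioo a b) ∩ Set.Ioo a b = ∅) :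
    b - a ≤ H * (B - A) ^ (1 + τ) := by
  have hc : Continuous s := Differentiable.continuous (fun x => (hd x).differentiableAt)
  have himg : Set.Ioo (s A) (s B) = Set.Ioo A B := by
    rw [← imgIoo hm hc A B hAB.le, hfix]
  have hsAB : s A < s B := hm hAB
  have hsA : s A = A := by
    have := congrArg sInf himg
    rwa [csInf_Ioo hsAB, csInf_Ioo hAB] at this
  have hsB : s B = B := by
    have := congrArg sSup himg
    rwa [csSup_Ioo hsAB, csSup_Ioo hAB] at this
  obtain ⟨ξ, hξmem, hξ⟩ := exists_hasDerivAt_eq_slope s s' hAB hc.continuousOn fun x _ => hd x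
  rw [hsA, hsB, div_self (sub_ne_zero.2 hAB.ne')] at hξ
  have hBA : (0:ℝ) < B - A := by linarith
  -- displacement bound
  set C : ℝ := H * (B - A) ^ τ with hC
  have hCnn : 0 ≤ C := mul_nonneg hH (Real.rpow_nonneg hBA.le τ)
  have hdisp : ∀ x ∈ Set.Icc A B, |s x - x| ≤ C * (B - A) := by
    intro x hx
    have hb : ∀ y ∈ Set.Icc A B, ‖s' y - 1‖ ≤ C := by
      intro y hy
      rw [Real.norm_eq_abs, ← hξ]
      refine (hHol y ξ).trans (mul_le_mul_of_nonneg_left ?_ hH)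
      refine Real.rpow_le_rpow (abs_nonneg _) ?_ hτ.le
      have h1 := hξmem.1; have h2 := hξmem.2
      have := hy.1; have := hy.2
      rw [abs_le]; constructor <;> linarith
    have key := Convex.norm_image_sub_le_of_norm_hasDerivWithin_le
      (f := fun t => s t - t) (f' := fun t => s' t - 1) (s := Set.Icc A B)
      (fun y _ => ((hd y).sub (hasDerivAt_id y)).hasDerivWithinAt)
      hb (convex_Icc A B) (Set.left_mem_Icc.2 hAB.le) hx
    simp only [hsA, sub_self, sub_zero, Real.norm_eq_abs] at key
    refine key.trans (mul_le_mul_of_nonneg_left ?_ hCnn)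
    rw [abs_le]; constructor
    · have := hx.1; linarith
    · have := hx.2; have := hx.1; linarith
  have hCB : C * (B - A) = H * (B - A) ^ (1 + τ) := by
    rw [hC, Real.rpow_add hBA, Real.rpow_one]; ring
  have hamem : a ∈ Set.Icc A B := by
    have h := (Set.Ioo_subset_Ioo_iff hab).1 hsub
    exact ⟨h.1, le_trans hab.le h.2⟩
  have hbmem : b ∈ Set.Icc A B := by
    have h := (Set.Ioo_subset_Ioo_iff hab).1 hsub
    exact ⟨le_trans h.1 hab.le, h.2⟩
  -- disjointness forces the interval to jump over itself
  rw [imgIoo hm hc a b hab.le, Set.Ioo_inter_Ioo] at hdisj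
  have hcases : b ≤ s a ∨ s b ≤ a := by
    by_contra hcon
    push_neg at hcon
    obtain ⟨h1, h2⟩ := hcon
    have hne : (Set.Ioo (s a ⊔ a) (s b ⊓ b)).Nonempty :=
      Set.nonempty_Ioo.2 (max_lt (lt_min (hm hab) h1) (lt_min h2 hab))
    rw [hdisj] at hne
    exact Set.not_nonempty_empty hne
  rw [← hCB]
  rcases hcases with h | h
  · have := hdisp a hamem
    have h2 : b - a ≤ |s a - a| := by
      rw [abs_of_nonneg (by linarith)]; linarith
    linarith
  · have := hdisp b hbmem
    have h2 : b - a ≤ |s b - b| := by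
      rw [abs_of_nonpos (by linarith), neg_sub]; linarith
    linarith

/-- the key claim of the `(k,u)`-Nesting Lemma.  With strictly
nested intervals `J 0 ⊋ J 1 ⊋ ⋯ ⊋ J (k-1)` (so `J (i-1)` is the paper's `Jᵢ`),
maps `w n`, and for each intermediate level a `C^{1,τ}` diffeomorphism `s` with
`[Ds]_τ ≤ N - 1` fixing `w n '' J (i-1)` setwise and displacing `w n '' J i` off
itself, one has `|w_n(J_{k-1})| ≤ N^(2^(k-2)-1) · |w_n(J₁)|^((1+τ)^(k-2))`. -/
theorem stmt11 (k : ℕ) (hk : 2 ≤ k) (τ u N : ℝ)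
    (hτ : 0 < τ) (hu0 : 0 < u) (hu1 : u ≤ 1)
    (hτu : u ≤ τ * (1 + τ) ^ (k - 2)) (hN : 1 ≤ N)
    (c e : ℕ → ℝ) (hce : ∀ i, i < k → c i < e i)
    (J : ℕ → Set ℝ) (hJ : ∀ i, i < k → J i = Set.Ioo (c i) (e i))
    (hnest : ∀ i, i + 1 < k → J (i + 1) ⊂ J i)
    (w : ℕ → ℝ → ℝ)
    (hw : ∀ n, StrictMono (w n) ∧ Continuous (w n))
    (hs : ∀ i, 1 ≤ i → i ≤ k - 2 → ∀ n : ℕ,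
      ∃ s s' : ℝ → ℝ, (∀ x, HasDerivAt s (s' x) x) ∧ StrictMono s ∧
        (∀ x y, |s' x - s' y| ≤ (N - 1) * |x - y| ^ τ) ∧
        s '' (w n '' J (i - 1)) = w n '' J (i - 1) ∧
        (s '' (w n '' J i)) ∩ (w n '' J i) = ∅) :
    ∀ n : ℕ, lenOf (w n '' J (k - 2))
      ≤ N ^ (2 ^ (k - 2) - 1) * lenOf (w n '' J 0) ^ ((1 + τ) ^ (k - 2)) := by
  intro n
  obtain ⟨hfm, hfc⟩ := hw n
  have himg : ∀ i, i < k → w n '' J i = Set.Ioo (w n (c i)) (w n (e i)) := by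
    intro i hi
    rw [hJ i hi]
    exact imgIoo hfm hfc _ _ (hce i hi).le
  have hlt : ∀ i, i < k → w n (c i) < w n (e i) := fun i hi => hfm (hce i hi)
  have hlen : ∀ i, i < k → lenOf (w n '' J i) = w n (e i) - w n (c i) := fun i hi => by
    rw [himg i hi, lenIoo _ _ (hlt i hi)]
  -- trivial base `k = 2`
  rcases Nat.lt_or_ge k 3 with hk3 | hk3
  · have hk2 : k = 2 := by omega
    subst hk2
    norm_num [Real.rpow_one]
  -- case τ > 1 : contradiction with the level-1 diffeomorphism
  rcases le_or_gt τ 1 with hτ1 | hτ1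
  · -- main induction, τ ≤ 1
    have key : ∀ m, m + 2 ≤ k →
        lenOf (w n '' J m) ≤ N ^ (2 ^ m - 1) * lenOf (w n '' J 0) ^ ((1 + τ) ^ m) := by
      intro m
      induction m with
      | zero =>
        intro _
        simp [Real.rpow_one]
      | succ m ih =>
        intro hm
        have hm' : m + 2 ≤ k := by omega
        have ihm := ih hm'
        obtain ⟨s, s', hd, hsm, hHol, hfix, hdisj⟩ := hs (m + 1) (by omega) (by omega) n
        simp only [Nat.add_sub_cancel] at hfix
        rw [himg m (by omega)] at hfix
        rw [himg (m + 1) (by omega)] at hdisj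
        have hsub : Set.Ioo (w n (c (m+1))) (w n (e (m+1))) ⊆
            Set.Ioo (w n (c m)) (w n (e m)) := by
          rw [← himg m (by omega), ← himg (m+1) (by omega)]
          exact Set.image_mono (hnest m (by omega)).subset
        have hstep := stepEst hd hsm (by linarith : (0:ℝ) ≤ N - 1) hτ hHol
          (hlt m (by omega)) (hlt (m+1) (by omega)) hsub hfix hdisj
        have hLm : lenOf (w n '' J m) = w n (e m) - w n (c m) := hlen m (by omega)
        have hLm1 : lenOf (w n '' J (m+1)) = w n (e (m+1)) - w n (c (m+1)) :=
          hlen (m+1) (by omega)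
        have hL0 : 0 ≤ lenOf (w n '' J 0) := by
          rw [hlen 0 (by omega)]
          have := hlt 0 (by omega); linarith
        have hLmnn : 0 ≤ lenOf (w n '' J m) := by
          rw [hLm]; have := hlt m (by omega); linarith
        have h1τ : (0:ℝ) < 1 + τ := by linarith
        have hX1 : (1:ℝ) ≤ N ^ (2 ^ m - 1) := one_le_pow₀ hN
        calc lenOf (w n '' J (m+1))
            ≤ (N - 1) * lenOf (w n '' J m) ^ (1 + τ) := by
              rw [hLm1, hLm]; exact hstep
          _ ≤ (N - 1) * (N ^ (2 ^ m - 1) * lenOf (w n '' J 0) ^ ((1 + τ) ^ m)) ^ (1 + τ) := by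
              refine mul_le_mul_of_nonneg_left ?_ (by linarith)
              exact Real.rpow_le_rpow hLmnn ihm h1τ.le
          _ = (N - 1) * (N ^ (2 ^ m - 1) : ℝ) ^ (1 + τ : ℝ) *
                lenOf (w n '' J 0) ^ ((1 + τ) ^ (m + 1)) := by
              rw [Real.mul_rpow (by positivity) (Real.rpow_nonneg hL0 _),
                ← Real.rpow_mul hL0, ← pow_succ]
              ring
          _ ≤ N ^ (2 ^ (m + 1) - 1) * lenOf (w n '' J 0) ^ ((1 + τ) ^ (m + 1)) := by
              refine mul_le_mul_of_nonneg_right ?_ (Real.rpow_nonneg hL0 _)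
              calc (N - 1) * (N ^ (2 ^ m - 1) : ℝ) ^ (1 + τ : ℝ)
                  ≤ N * (N ^ (2 ^ m - 1) : ℝ) ^ (2 : ℝ) := by
                    refine mul_le_mul (by linarith)
                      (Real.rpow_le_rpow_of_exponent_le hX1 (by linarith)) ?_ (by linarith)
                    exact Real.rpow_nonneg (by positivity) _
                _ = N ^ (2 ^ (m + 1) - 1) := by
                    rw [show ((2:ℝ)) = ((2:ℕ):ℝ) by norm_num, Real.rpow_natCast, ← pow_mul,
                      ← pow_succ']
                    congr 1
                    have : 1 ≤ 2 ^ m := Nat.one_le_two_pow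
                    omega
    have := key (k - 2) (by omega)
    exact this
  · -- τ > 1 : any such Hölder derivative is constant, contradiction
    exfalso
    obtain ⟨s, s', hd, hsm, hHol, hfix, hdisj⟩ := hs 1 le_rfl (by omega) n
    have hN1 : (0:ℝ) ≤ N - 1 := by linarith
    -- s' has zero derivative everywhere
    have hds' : ∀ x, HasDerivAt s' 0 x := by
      intro x
      rw [hasDerivAt_iff_isLittleO]
      simp only [smul_zero, sub_zero]
      rw [Asymptotics.isLittleO_iff]
      intro ε hε
      have htend : Filter.Tendsto (fun y => (N - 1) * |y - x| ^ (τ - 1)) (nhds x) (nhds 0) := by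
        have h1 : Filter.Tendsto (fun y => |y - x|) (nhds x) (nhds 0) := by
          have : Continuous fun y : ℝ => |y - x| := by continuity
          simpa using this.tendsto x
        have h2 : Filter.Tendsto (fun t : ℝ => (N - 1) * t ^ (τ - 1)) (nhds 0) (nhds 0) := by
          have hc : ContinuousAt (fun t : ℝ => t ^ (τ - 1)) 0 :=
            Real.continuousAt_rpow_const 0 (τ - 1) (Or.inr (by linarith))
          have := (hc.const_smul (N - 1)).tendsto
          simp only [Pi.smul_apply, Real.zero_rpow (by linarith : τ - 1 ≠ 0), smul_eq_mul, mul_zero] at this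
          exact this
        exact h2.comp h1
      have hev : ∀ᶠ y in nhds x, (N - 1) * |y - x| ^ (τ - 1) < ε :=
        htend.eventually_lt_const hε
      filter_upwards [hev] with y hy
      rcases eq_or_ne y x with rfl | hne
      · simp
      · have habs : (0:ℝ) < |y - x| := abs_pos.2 (sub_ne_zero.2 hne)
        rw [Real.norm_eq_abs, Real.norm_eq_abs]
        calc |s' y - s' x| ≤ (N - 1) * |y - x| ^ τ := hHol y x
          _ = (N - 1) * |y - x| ^ (τ - 1) * |y - x| := by
              rw [show τ = (τ - 1) + 1 by ring, Real.rpow_add habs, Real.rpow_one]; ring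
          _ ≤ ε * |y - x| := mul_le_mul_of_nonneg_right hy.le (abs_nonneg _)
    have hs'const : ∀ x y, s' x = s' y := by
      intro x y
      exact is_const_of_deriv_eq_zero (fun z => (hds' z).differentiableAt)
        (fun z => (hds' z).deriv) x y
    -- identify the fixed endpoints and the MVT point
    have hc : Continuous s := Differentiable.continuous (fun x => (hd x).differentiableAt)
    rw [himg 0 (by omega)] at hfix
    have hAB := hlt 0 (by omega)
    have himg2 : Set.Ioo (s (w n (c 0))) (s (w n (e 0))) = Set.Ioo (w n (c 0)) (w n (e 0)) := by
      rw [← imgIoo hsm hc _ _ hAB.le, hfix]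
    have hsAB : s (w n (c 0)) < s (w n (e 0)) := hsm hAB
    have hsA : s (w n (c 0)) = w n (c 0) := by
      have := congrArg sInf himg2
      rwa [csInf_Ioo hsAB, csInf_Ioo hAB] at this
    obtain ⟨ξ, _, hξ⟩ := exists_hasDerivAt_eq_slope s s' hAB hc.continuousOn fun x _ => hd x
    rw [hsA] at hξ
    have hsB : s (w n (e 0)) = w n (e 0) := by
      have := congrArg sSup himg2
      rwa [csSup_Ioo hsAB, csSup_Ioo hAB] at this
    rw [hsB, div_self (sub_ne_zero.2 hAB.ne')] at hξ
    have hs'1 : ∀ x, s' x = 1 := fun x => (hs'const x ξ).trans hξ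
    -- s is the identity
    have hid : ∀ x, s x = x := by
      intro x
      have hconst : ∀ a b : ℝ, s a - a = s b - b := by
        intro a b
        refine is_const_of_deriv_eq_zero (f := fun t => s t - t) ?_ ?_ a b
        · exact fun z => ((hd z).sub (hasDerivAt_id z)).differentiableAt
        · intro z
          have : HasDerivAt (fun t => s t - t) (s' z - 1) z := (hd z).sub (hasDerivAt_id z)
          rw [this.deriv, hs'1, sub_self]
      have := hconst x (w n (c 0))
      rw [hsA, sub_self] at this
      linarith [this]
    have hsimg : s '' (w n '' J 1) = w n '' J 1 := by
      have : s = id := funext hid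
      rw [this, Set.image_id]
    rw [hsimg, Set.inter_self] at hdisj
    have hne : (w n '' J 1).Nonempty := by
      rw [hJ 1 (by omega)]
      exact ((Set.nonempty_Ioo.2 (hce 1 (by omega)))).image _
    exact hne.ne_empty hdisj
end

section
/- For each τ < (√5 − 1)/2 and sufficiently large q > 1, there exists a choice of p, q', r > 1 satisfying all of: (A) rτ ≤ q'/q < 1; (B) 1/p + 1/q + 1/r < 1; (C) 1/q' + 1/r < 1; (D) τp(1 − 1/r) ≤ 1; (E) τq'(1 − 1/r) ≤ 1. -/
/-- for each `τ < (√5 − 1)/2` and all sufficiently large `q > 1`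
there exist `p, q', r > 1` satisfying conditions (A)–(E). -/
theorem stmt14 (τ : ℝ) (hτ0 : 0 < τ) (hτ : τ < (Real.sqrt 5 - 1) / 2) :
    ∃ q₀ : ℝ, 1 < q₀ ∧ ∀ q : ℝ, q₀ ≤ q →
      ∃ p q' r : ℝ, 1 < p ∧ 1 < q' ∧ 1 < r ∧
        (r * τ ≤ q' / q ∧ q' / q < 1) ∧
        (1 / p + 1 / q + 1 / r < 1) ∧
        (1 / q' + 1 / r < 1) ∧
        (τ * p * (1 - 1 / r) ≤ 1) ∧
        (τ * q' * (1 - 1 / r) ≤ 1) := by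
  have h5 : Real.sqrt 5 ^ 2 = 5 := Real.sq_sqrt (by norm_num)
  have h5n : (0:ℝ) ≤ Real.sqrt 5 := Real.sqrt_nonneg 5
  have hkey : τ ^ 2 + τ < 1 := by nlinarith [sq_nonneg (Real.sqrt 5 - 1 - 2*τ)]
  clear hτ h5 h5n
  have hτ1 : τ < 1 := by nlinarith
  have h1τ : 0 < 1 - τ := by linarith
  have hτ2 : (0:ℝ) < τ^2 := by positivity
  obtain ⟨a, ha1, ha2, ha3⟩ : ∃ a : ℝ, 1/(1-τ) < a ∧ 1/τ < a ∧ a < 1/τ^2 := by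
    refine ⟨(max (1/(1-τ)) (1/τ) + 1/τ^2)/2, ?_, ?_, ?_⟩
    · have h1 : 1/(1-τ) ≤ max (1/(1-τ)) (1/τ) := le_max_left _ _
      have h2 : 1/(1-τ) < 1/τ^2 := one_div_lt_one_div_of_lt hτ2 (by nlinarith)
      linarith
    · have h1 : 1/τ ≤ max (1/(1-τ)) (1/τ) := le_max_right _ _
      have h2 : 1/τ < 1/τ^2 := one_div_lt_one_div_of_lt hτ2 (by nlinarith)
      linarith
    · have h1 : max (1/(1-τ)) (1/τ) < 1/τ^2 := by
        apply max_lt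
        · exact one_div_lt_one_div_of_lt hτ2 (by nlinarith)
        · exact one_div_lt_one_div_of_lt hτ2 (by nlinarith)
      linarith
  have ha1τ : 1 < a * (1-τ) := by rw [div_lt_iff₀ h1τ] at ha1; linarith
  have haτ : 1 < τ * a := by rw [div_lt_iff₀ hτ0] at ha2; linarith
  have ha0 : 0 < a := by nlinarith
  have hτ2a : 0 < 1 - τ^2 * a := by rw [lt_div_iff₀ hτ2] at ha3; linarith
  have hB : τ * a + 1 < a := by nlinarith
  have hdp : 0 < a/(1-τ^2*a) := div_pos ha0 hτ2a
  refine ⟨a/(1-τ^2*a) + a + τ*a + 2, by nlinarith, fun q hq => ?_⟩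
  have hqa : a < q := by nlinarith
  have hq0 : 0 < q := lt_trans ha0 hqa
  have hqτa : τ * a < q := by nlinarith
  have hqbig : a ≤ q * (1 - τ^2*a) := by
    have h1 : a/(1-τ^2*a) ≤ q := by nlinarith
    rw [div_le_iff₀ hτ2a] at h1; linarith
  have hb0 : 0 < τ * a := by positivity
  have hqa0 : 0 < q - a := by linarith
  have hqne : q ≠ 0 := ne_of_gt hq0
  have hτne : τ ≠ 0 := ne_of_gt hτ0
  have hane : a ≠ 0 := ne_of_gt ha0
  refine ⟨q/(τ*a), q/(τ*a), q/(q-a), ?_, ?_, ?_, ⟨?_, ?_⟩, ?_, ?_, ?_, ?_⟩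
  · rw [lt_div_iff₀ hb0]; linarith
  · rw [lt_div_iff₀ hb0]; linarith
  · rw [lt_div_iff₀ hqa0]; linarith
  · -- r * τ ≤ q'/q
    rw [div_div, mul_comm (τ*a) q, ← div_div, div_self hqne,
      div_mul_eq_mul_div, div_le_div_iff₀ hqa0 hb0]
    nlinarith [hqbig]
  · rw [div_div, mul_comm (τ*a) q, ← div_div, div_self hqne, div_lt_one hb0]
    linarith
  · rw [one_div_div, one_div_div, ← add_div, ← add_div, div_lt_one hq0]
    linarith
  · rw [one_div_div, one_div_div, ← add_div, div_lt_one hq0]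
    linarith
  all_goals {
    rw [one_div_div, show (1 - (q-a)/q) = a/q by field_simp; ring]
    exact le_of_eq (by field_simp) }
end
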